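/- arXiv:1604.07350 — 5 statements merged into one kernel-verified Lean document; each statement's English description precedes it below -/
import Mathlib

section
/- Let μ be a non-degenerate stable probability measure on ℝ with characteristic function φ, and for each positive integer n let a_n > 0 and b_n ∈ ℝ satisfy φ(t)^n = φ(a_n t)·exp(i b_n t) for all real t. Then there exists α with 0 < α ≤ 2 such that a_n = n^{1/α} for every n. Moreover, for this α: whenever a > 0, b > 0, c > 0 and d ∈ ℝ satisfy φ(a t)·φ(b t) = φ(c t)·exp(i d t) for all real t, one has a^α + b^α = c^α. -/
open MeasureTheory Complex Filter

set_option linter.unusedSectionVars false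
set_option maxHeartbeats 1000000

/-- The characteristic function of a measure on ℝ. -/
noncomputable def charFun' (μ : Measure ℝ) (t : ℝ) : ℂ :=
  ∫ x, Complex.exp (Complex.I * t * x) ∂μ

lemma norm_exp_I_mul (t x : ℝ) : ‖Complex.exp (Complex.I * t * x)‖ = 1 := by
  rw [show Complex.I * t * x = (t * x : ℝ) * Complex.I by push_cast; ring,
    Complex.norm_exp_ofReal_mul_I]

section aux

variable (μ : Measure ℝ) [IsProbabilityMeasure μ]

lemma sc_integrable (t : ℝ) :
    Integrable (fun x : ℝ => Complex.exp (Complex.I * t * x)) μ := by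
  refine Integrable.mono' (integrable_const 1) ?_ ?_
  · exact (Continuous.cexp (continuous_const.mul Complex.continuous_ofReal)).aestronglyMeasurable
  · filter_upwards with x
    rw [norm_exp_I_mul]

lemma charFun'_zero : charFun' μ 0 = 1 := by
  simp [charFun']

lemma norm_charFun'_le_one (t : ℝ) : ‖charFun' μ t‖ ≤ 1 := by
  calc ‖charFun' μ t‖ ≤ ∫ x, ‖Complex.exp (Complex.I * t * x)‖ ∂μ :=
        norm_integral_le_integral_norm _
    _ ≤ 1 := by
        apply le_of_eq
        have h1 : ∀ x : ℝ, ‖Complex.exp (Complex.I * t * x)‖ = 1 := fun x => by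
          rw [norm_exp_I_mul]
        simp [h1]

lemma continuous_charFun' : Continuous (charFun' μ) := by
  apply continuous_of_dominated (bound := fun _ : ℝ => (1 : ℝ))
  · exact fun t =>
      (Continuous.cexp (continuous_const.mul Complex.continuous_ofReal)).aestronglyMeasurable
  · intro t
    filter_upwards with x
    rw [norm_exp_I_mul]
  · exact integrable_const 1
  · filter_upwards with x
    exact Continuous.cexp ((continuous_const.mul Complex.continuous_ofReal).mul continuous_const)

end aux

noncomputable def gFun (μ : Measure ℝ) (t : ℝ) : ℝ := Complex.normSq (charFun' μ t)

section gsec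

variable (μ : Measure ℝ) [IsProbabilityMeasure μ]

lemma gFun_zero : gFun μ 0 = 1 := by simp [gFun, charFun'_zero]

lemma gFun_nonneg (t : ℝ) : 0 ≤ gFun μ t := Complex.normSq_nonneg _

lemma gFun_le_one (t : ℝ) : gFun μ t ≤ 1 := by
  have h := norm_charFun'_le_one μ t
  have h0 := norm_nonneg (charFun' μ t)
  rw [gFun, ← Complex.sq_norm]
  nlinarith

lemma continuous_gFun : Continuous (gFun μ) :=
  Complex.continuous_normSq.comp (continuous_charFun' μ)

end gsec

section gsec2

variable (μ : Measure ℝ) [IsProbabilityMeasure μ]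

lemma gFun_lt_one_of (t : ℝ) (h : ‖charFun' μ t‖ < 1) : gFun μ t < 1 := by
  have h0 := norm_nonneg (charFun' μ t)
  rw [gFun, ← Complex.sq_norm]
  nlinarith

lemma continuous_sub_fun : Continuous (fun p : ℝ × ℝ => p.1 - p.2) :=
  continuous_fst.sub continuous_snd

lemma prod_integrable_exp (t : ℝ) :
    Integrable (fun p : ℝ × ℝ => Complex.exp (Complex.I * t * ((p.1 : ℂ) - (p.2 : ℂ))))
      (μ.prod μ) := by
  refine Integrable.mono' (integrable_const 1) ?_ ?_
  · refine (Continuous.cexp ?_).aestronglyMeasurable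
    exact continuous_const.mul
      ((Complex.continuous_ofReal.comp continuous_fst).sub
        (Complex.continuous_ofReal.comp continuous_snd))
  · filter_upwards with p
    rw [show Complex.I * t * ((p.1 : ℂ) - (p.2 : ℂ)) = Complex.I * t * ((p.1 - p.2 : ℝ) : ℂ) by
      push_cast; ring]
    rw [norm_exp_I_mul]

lemma prod_integrable_cos (t : ℝ) :
    Integrable (fun p : ℝ × ℝ => Real.cos (t * (p.1 - p.2))) (μ.prod μ) := by
  refine Integrable.mono' (integrable_const 1) ?_ ?_
  · exact (Real.continuous_cos.comp (continuous_const.mul (continuous_sub_fun))).aestronglyMeasurable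
  · filter_upwards with p
    rw [Real.norm_eq_abs]
    exact Real.abs_cos_le_one _

lemma gFun_repr (t : ℝ) :
    (1 : ℝ) - gFun μ t = ∫ p : ℝ × ℝ, (1 - Real.cos (t * (p.1 - p.2))) ∂(μ.prod μ) := by
  have hconj : (starRingEnd ℂ) (charFun' μ t) = ∫ x : ℝ, Complex.exp (-(Complex.I * t * x)) ∂μ := by
    rw [charFun', ← integral_conj]
    congr 1
    ext x
    rw [← Complex.exp_conj]
    congr 1
    simp [map_mul, Complex.conj_I, Complex.conj_ofReal]
  have key : (gFun μ t : ℂ) =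
      ∫ p : ℝ × ℝ, Complex.exp (Complex.I * t * ((p.1 : ℂ) - (p.2 : ℂ))) ∂(μ.prod μ) := by
    rw [gFun, ← Complex.mul_conj, hconj, charFun', ← integral_prod_mul]
    congr 1
    ext p
    rw [← Complex.exp_add]
    congr 1
    ring
  have hcos : gFun μ t = ∫ p : ℝ × ℝ, Real.cos (t * (p.1 - p.2)) ∂(μ.prod μ) := by
    have h1 := congrArg Complex.re key
    simp only [Complex.ofReal_re] at h1
    rw [h1, ← RCLike.re_to_complex, ← integral_re (prod_integrable_exp μ t)]
    congr 1
    ext p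
    simp only [RCLike.re_to_complex]
    rw [show Complex.I * t * ((p.1 : ℂ) - (p.2 : ℂ)) = ((t * (p.1 - p.2) : ℝ) : ℂ) * Complex.I by
      push_cast; ring]
    have h2 := Complex.exp_ofReal_mul_I_re (t * (p.1 - p.2))
    push_cast at h2 ⊢
    exact h2
  rw [integral_sub (integrable_const 1) (prod_integrable_cos μ t), integral_const]
  simp [hcos]

end gsec2

lemma gFun_neg (μ : Measure ℝ) [IsProbabilityMeasure μ] (t : ℝ) : gFun μ (-t) = gFun μ t := by
  have hc : charFun' μ (-t) = (starRingEnd ℂ) (charFun' μ t) := by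
    rw [charFun', charFun', ← integral_conj]
    congr 1
    ext x
    rw [← Complex.exp_conj]
    congr 1
    simp [map_mul, Complex.conj_I, Complex.conj_ofReal]
  rw [gFun, hc, Complex.normSq_conj, gFun]

lemma cos_lower {u : ℝ} (hu : |u| ≤ 1) : u ^ 2 / 4 ≤ 1 - Real.cos u := by
  have h := Real.cos_bound hu
  have habs : |u| ^ 2 = u ^ 2 := sq_abs u
  have h4 : |u| ^ 4 ≤ |u| ^ 2 := by
    have h1 : |u| ^ 2 ≤ 1 := pow_le_one₀ (abs_nonneg u) hu
    calc |u| ^ 4 = |u| ^ 2 * |u| ^ 2 := by ring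
      _ ≤ |u| ^ 2 * 1 := mul_le_mul_of_nonneg_left h1 (by positivity)
      _ = |u| ^ 2 := mul_one _
  rw [abs_le] at h
  nlinarith

section moment

variable (μ : Measure ℝ) [IsProbabilityMeasure μ]

lemma measurableSet_AR (R : ℝ) : MeasurableSet {p : ℝ × ℝ | |p.1 - p.2| ≤ R} := by
  have : IsClosed {p : ℝ × ℝ | |p.1 - p.2| ≤ R} :=
    IsClosed.preimage (_root_.continuous_abs.comp (continuous_fst.sub continuous_snd)) isClosed_Iic
  exact this.measurableSet

lemma integrableOn_sq_AR (R : ℝ) (hR : 0 ≤ R) :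
    IntegrableOn (fun p : ℝ × ℝ => (p.1 - p.2) ^ 2) {p : ℝ × ℝ | |p.1 - p.2| ≤ R}
      (μ.prod μ) := by
  refine Integrable.mono' (integrable_const (R ^ 2)) ?_ ?_
  · exact (((continuous_fst.sub continuous_snd).pow 2).aestronglyMeasurable).restrict
  · rw [ae_restrict_iff' (measurableSet_AR R)]
    filter_upwards with p hp
    rw [Real.norm_eq_abs, _root_.abs_of_nonneg (sq_nonneg _)]
    calc (p.1 - p.2) ^ 2 = |p.1 - p.2| ^ 2 := (_root_.sq_abs _).symm
      _ ≤ R ^ 2 := by nlinarith [abs_nonneg (p.1 - p.2), hp]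

lemma moment_contradiction (t0 : ℝ) (ht0 : gFun μ t0 < 1) (α C : ℝ) (hα : 2 < α) (hC : 0 ≤ C)
    (hbound : ∀ s : ℝ, 0 < s → 1 - gFun μ s ≤ C * s ^ α) : False := by
  set ν := μ.prod μ with hν
  set A : ℝ → Set (ℝ × ℝ) := fun R => {p : ℝ × ℝ | |p.1 - p.2| ≤ R} with hA
  -- Step 1
  have step1 : ∀ s : ℝ, 0 < s → ∫ p in A (1/s), (p.1 - p.2) ^ 2 ∂ν ≤ 4 * C * s ^ (α - 2) := by
    intro s hs
    have hint_cos : Integrable (fun p : ℝ × ℝ => 4 / s ^ 2 * (1 - Real.cos (s * (p.1 - p.2)))) ν := by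
      exact (((integrable_const 1).sub (prod_integrable_cos μ s)).const_mul _)
    have h1 : ∫ p in A (1/s), (p.1 - p.2) ^ 2 ∂ν ≤
        ∫ p in A (1/s), 4 / s ^ 2 * (1 - Real.cos (s * (p.1 - p.2))) ∂ν := by
      refine setIntegral_mono_on (integrableOn_sq_AR μ (1/s) (one_div_pos.mpr hs).le)
        (hint_cos.integrableOn) (measurableSet_AR _) ?_
      intro p hp
      have hsp : |s * (p.1 - p.2)| ≤ 1 := by
        rw [abs_mul, abs_of_pos hs]
        have : |p.1 - p.2| ≤ 1 / s := hp
        calc s * |p.1 - p.2| ≤ s * (1 / s) := by nlinarith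
          _ = 1 := by field_simp
      have hcos := cos_lower hsp
      have hs2 : (0:ℝ) < s ^ 2 := by positivity
      have hexp : (s * (p.1 - p.2)) ^ 2 = s ^ 2 * (p.1 - p.2) ^ 2 := by ring
      rw [hexp] at hcos
      rw [show 4 / s ^ 2 * (1 - Real.cos (s * (p.1 - p.2)))
          = 4 * (1 - Real.cos (s * (p.1 - p.2))) / s ^ 2 by ring, le_div_iff₀ hs2]
      nlinarith
    have h2 : ∫ p in A (1/s), 4 / s ^ 2 * (1 - Real.cos (s * (p.1 - p.2))) ∂ν ≤
        ∫ p : ℝ × ℝ, 4 / s ^ 2 * (1 - Real.cos (s * (p.1 - p.2))) ∂ν := by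
      refine setIntegral_le_integral hint_cos ?_
      filter_upwards with p
      have hcle := Real.cos_le_one (s * (p.1 - p.2))
      have h0 : (0:ℝ) ≤ 4 / s ^ 2 := by positivity
      exact mul_nonneg h0 (by linarith)
    have h3 : ∫ p : ℝ × ℝ, 4 / s ^ 2 * (1 - Real.cos (s * (p.1 - p.2))) ∂ν =
        4 / s ^ 2 * (1 - gFun μ s) := by
      rw [integral_const_mul, ← gFun_repr]
    have h4 : 4 / s ^ 2 * (1 - gFun μ s) ≤ 4 / s ^ 2 * (C * s ^ α) := by
      have := hbound s hs
      have hs2 : (0:ℝ) ≤ 4 / s ^ 2 := by positivity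
      exact mul_le_mul_of_nonneg_left this hs2
    have h5 : 4 / s ^ 2 * (C * s ^ α) = 4 * C * s ^ (α - 2) := by
      rw [Real.rpow_sub hs]
      rw [show s ^ (2:ℝ) = s ^ (2:ℕ) by rw [← Real.rpow_natCast s 2]; norm_num]
      field_simp
    linarith
  -- Step 2
  have step2 : ∀ R : ℝ, 0 < R → ∫ p in A R, (p.1 - p.2) ^ 2 ∂ν = 0 := by
    intro R hR
    have hnn : 0 ≤ ∫ p in A R, (p.1 - p.2) ^ 2 ∂ν :=
      setIntegral_nonneg (measurableSet_AR R) (fun p _ => sq_nonneg _)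
    have hle : ∀ s : ℝ, 0 < s → s ≤ 1 / R → ∫ p in A R, (p.1 - p.2) ^ 2 ∂ν ≤
        4 * C * s ^ (α - 2) := by
      intro s hs hsR
      refine le_trans ?_ (step1 s hs)
      refine setIntegral_mono_set (integrableOn_sq_AR μ (1/s) (one_div_pos.mpr hs).le) ?_ ?_
      · filter_upwards with p using sq_nonneg _
      · apply HasSubset.Subset.eventuallyLE
        intro p hp
        have h1 : s * R ≤ 1 := (le_div_iff₀ hR).1 hsR
        have hRs : R ≤ 1 / s := (le_div_iff₀ hs).2 (by rw [mul_comm]; exact h1)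
        exact le_trans hp hRs
    have htends : Tendsto (fun j : ℕ => 4 * C * ((j : ℝ) + 1) ^ (-(α - 2))) atTop (nhds 0) := by
      have h1 : Tendsto (fun j : ℕ => ((j : ℝ) + 1)) atTop atTop :=
        tendsto_atTop_add_const_right atTop 1 tendsto_natCast_atTop_atTop
      have h2 := (tendsto_rpow_neg_atTop (by linarith : (0:ℝ) < α - 2)).comp h1
      have h3 := h2.const_mul (4 * C)
      simpa using h3
    have hev : ∀ᶠ j : ℕ in atTop, ∫ p in A R, (p.1 - p.2) ^ 2 ∂ν ≤
        4 * C * ((j : ℝ) + 1) ^ (-(α - 2)) := by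
      filter_upwards [eventually_ge_atTop ⌈R⌉₊] with j hj
      have hj1 : R ≤ (j : ℝ) + 1 := by
        calc R ≤ (⌈R⌉₊ : ℝ) := Nat.le_ceil _
          _ ≤ (j : ℝ) := by exact_mod_cast hj
          _ ≤ (j : ℝ) + 1 := by linarith
      have hjpos : (0:ℝ) < (j : ℝ) + 1 := by positivity
      have hs : (0:ℝ) < ((j : ℝ) + 1)⁻¹ := by positivity
      have hsR : ((j : ℝ) + 1)⁻¹ ≤ 1 / R := by
        rw [inv_eq_one_div]
        exact one_div_le_one_div_of_le hR hj1
      have := hle _ hs hsR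
      rwa [Real.inv_rpow (le_of_lt hjpos), ← Real.rpow_neg (le_of_lt hjpos)] at this
    have hfin := ge_of_tendsto htends hev
    linarith
  -- Step 3: a.e. equality on each truncation set
  have step3 : ∀ j : ℕ, ∀ᵐ p ∂ν, p ∈ A ((j : ℝ) + 1) → p.1 = p.2 := by
    intro j
    have hz := step2 ((j : ℝ) + 1) (by positivity)
    have hnn : (fun _ => (0:ℝ)) ≤ᵐ[ν.restrict (A ((j : ℝ) + 1))]
        (fun p : ℝ × ℝ => (p.1 - p.2) ^ 2) :=
      ae_of_all _ (fun p => sq_nonneg _)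
    have h := (setIntegral_eq_zero_iff_of_nonneg_ae hnn
      (integrableOn_sq_AR μ _ (by positivity))).1 hz
    have h2 := (ae_restrict_iff' (measurableSet_AR _)).1 h
    filter_upwards [h2] with p hp hpA
    have h3 : (p.1 - p.2) ^ 2 = 0 := hp hpA
    have h4 : p.1 - p.2 = 0 := by
      nlinarith [sq_nonneg (p.1 - p.2)]
    linarith
  have step4 : ∀ᵐ p ∂ν, p.1 = p.2 := by
    have hall := ae_all_iff.2 step3
    filter_upwards [hall] with p hp
    refine hp ⌈|p.1 - p.2|⌉₊ ?_
    show |p.1 - p.2| ≤ (⌈|p.1 - p.2|⌉₊ : ℝ) + 1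
    calc |p.1 - p.2| ≤ (⌈|p.1 - p.2|⌉₊ : ℝ) := Nat.le_ceil _
      _ ≤ (⌈|p.1 - p.2|⌉₊ : ℝ) + 1 := by linarith
  have step5 : (1:ℝ) - gFun μ t0 = 0 := by
    rw [gFun_repr]
    rw [show (0:ℝ) = ∫ _ : ℝ × ℝ, (0:ℝ) ∂ν by simp]
    apply integral_congr_ae
    filter_upwards [step4] with p hp
    simp [hp]
  linarith

end moment

section abstractG

variable {g : ℝ → ℝ}

lemma G_false_of_scale_le (hcont : Continuous g) (hg0 : g 0 = 1)
    (hlt : ∃ t, g t < 1) {r : ℝ} (hr0 : 0 ≤ r) (hr1 : r < 1)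
    (hr : ∀ t, g (r * t) ≤ g t) : False := by
  obtain ⟨s, hs⟩ := hlt
  have hpow : ∀ k : ℕ, g (r ^ k * s) ≤ g s := by
    intro k
    induction k with
    | zero => simp
    | succ n ih =>
      calc g (r ^ (n + 1) * s) = g (r * (r ^ n * s)) := by rw [show r ^ (n+1) * s = r * (r ^ n * s) by ring]
      _ ≤ g (r ^ n * s) := hr _
      _ ≤ g s := ih
  have htend : Tendsto (fun k : ℕ => g (r ^ k * s)) atTop (nhds 1) := by
    have h1 : Tendsto (fun k : ℕ => r ^ k * s) atTop (nhds 0) := by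
      simpa using (tendsto_pow_atTop_nhds_zero_of_lt_one hr0 hr1).mul_const s
    simpa [hg0, Function.comp_def] using (hcont.tendsto 0).comp h1
  have := le_of_tendsto htend (Eventually.of_forall hpow)
  linarith

lemma G_uniq (hcont : Continuous g) (hg0 : g 0 = 1)
    (hlt : ∃ t, g t < 1) {c c' : ℝ} (hc : 0 < c) (hc' : 0 < c')
    (h : ∀ t, g (c * t) = g (c' * t)) : c = c' := by
  have key : ∀ u v : ℝ, 0 < u → 0 < v → (∀ t, g (u * t) = g (v * t)) → ¬ (u < v) := by
    intro u v hu hv huv hlt'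
    refine G_false_of_scale_le hcont hg0 hlt (r := u / v) (by positivity)
      ((div_lt_one hv).mpr hlt') ?_
    intro t
    have h1 : u / v * t = u * (t / v) := by field_simp
    have h2 : v * (t / v) = t := by field_simp
    rw [h1, huv (t / v), h2]
  have h1 := key c c' hc hc' h
  have h2 := key c' c hc' hc (fun t => (h t).symm)
  rcases lt_trichotomy c c' with h' | h' | h'
  · exact absurd h' h1
  · exact h'
  · exact absurd h' h2

end abstractG

section powerlaw

lemma pow_of_log_eq {x : ℝ} (hx : 0 < x) {n : ℕ} (hn : 0 < n) {c : ℝ}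
    (h : Real.log x = c * Real.log n) : x = (n : ℝ) ^ c := by
  have hn' : (0:ℝ) < n := by exact_mod_cast hn
  rw [← Real.exp_log hx, h, Real.rpow_def_of_pos hn']
  ring_nf

lemma power_law {A : ℕ → ℝ} (hA : ∀ n : ℕ, 0 < n → 0 < A n) (hA1 : A 1 = 1)
    (hmul : ∀ m n : ℕ, 0 < m → 0 < n → A (m * n) = A m * A n)
    (hmono : ∀ m n : ℕ, 0 < m → m ≤ n → A m ≤ A n) (h2 : 1 < A 2) :
    ∀ n : ℕ, 0 < n → A n = (n : ℝ) ^ (Real.log (A 2) / Real.log 2) := by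
  have hApow : ∀ p : ℕ, 0 < p → ∀ j : ℕ, A (p ^ j) = A p ^ j := by
    intro p hp j
    induction j with
    | zero => simpa using hA1
    | succ i ih => rw [pow_succ, hmul _ p (by positivity) hp, ih, pow_succ]
  set L2 := Real.log (A 2) with hL2def
  have l2pos : (0:ℝ) < Real.log 2 := Real.log_pos (by norm_num)
  have L2pos : 0 < L2 := Real.log_pos h2
  intro n hn
  rcases Nat.lt_or_ge n 2 with hn2 | hn2
  · interval_cases n
    rw [hA1]
    norm_num
  · have hnR : (1:ℝ) < n := by exact_mod_cast hn2
    have lnpos : 0 < Real.log n := Real.log_pos hnR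
    have hAn2 : A 2 ≤ A n := hmono 2 n (by norm_num) hn2
    have hAnpos : 0 < A n := hA n hn
    have hAn1 : 1 < A n := lt_of_lt_of_le h2 hAn2
    set Ln := Real.log (A n) with hLndef
    set ln := Real.log n with hlndef
    have hkey : ∀ m : ℕ, 0 < m → |Ln * Real.log 2 - ln * L2| * m ≤ L2 * Real.log 2 := by
      intro m hm
      set k := Nat.log 2 (n ^ m) with hk
      have hnm : n ^ m ≠ 0 := by positivity
      have h1 : 2 ^ k ≤ n ^ m := Nat.pow_log_le_self 2 hnm
      have h2' : n ^ m ≤ 2 ^ (k + 1) := le_of_lt (Nat.lt_pow_succ_log_self (by norm_num) _)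
      have hA1' : A 2 ^ k ≤ A n ^ m := by
        rw [← hApow 2 (by norm_num) k, ← hApow n hn m]
        exact hmono _ _ (by positivity) h1
      have hA2' : A n ^ m ≤ A 2 ^ (k + 1) := by
        rw [← hApow 2 (by norm_num) (k+1), ← hApow n hn m]
        exact hmono _ _ (by positivity) h2'
      have hpos2k : (0:ℝ) < A 2 ^ k := by positivity
      have b1 : (k : ℝ) * L2 ≤ m * Ln := by
        have := Real.log_le_log hpos2k hA1'
        rwa [Real.log_pow, Real.log_pow] at this
      have b2 : (m : ℝ) * Ln ≤ (k + 1) * L2 := by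
        have := Real.log_le_log (by positivity) hA2'
        rwa [Real.log_pow, Real.log_pow, Nat.cast_add, Nat.cast_one] at this
      have hc1 : ((2:ℝ)) ^ k ≤ (n:ℝ) ^ m := by exact_mod_cast h1
      have hc2 : ((n:ℝ)) ^ m ≤ (2:ℝ) ^ (k + 1) := by exact_mod_cast h2'
      have b3 : (k : ℝ) * Real.log 2 ≤ m * ln := by
        have := Real.log_le_log (by positivity) hc1
        rwa [Real.log_pow, Real.log_pow] at this
      have b4 : (m : ℝ) * ln ≤ (k + 1) * Real.log 2 := by
        have := Real.log_le_log (by positivity) hc2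
        rwa [Real.log_pow, Real.log_pow, Nat.cast_add, Nat.cast_one] at this
      have hmnn : (0:ℝ) ≤ (m:ℝ) := Nat.cast_nonneg m
      rw [show |Ln * Real.log 2 - ln * L2| * m = |(Ln * Real.log 2 - ln * L2) * m| by
        rw [abs_mul, _root_.abs_of_nonneg hmnn]]
      rw [abs_le]
      constructor
      · nlinarith [mul_le_mul_of_nonneg_right b1 (le_of_lt l2pos),
          mul_le_mul_of_nonneg_right b4 (le_of_lt L2pos)]
      · nlinarith [mul_le_mul_of_nonneg_right b2 (le_of_lt l2pos),
          mul_le_mul_of_nonneg_right b3 (le_of_lt L2pos)]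
    have hX : Ln * Real.log 2 - ln * L2 = 0 := by
      by_contra hX
      have habs : 0 < |Ln * Real.log 2 - ln * L2| := abs_pos.mpr hX
      obtain ⟨m, hm⟩ := exists_nat_gt (L2 * Real.log 2 / |Ln * Real.log 2 - ln * L2|)
      have hm0 : 0 < m := by
        by_contra hm0
        push_neg at hm0
        interval_cases m
        simp only [Nat.cast_zero] at hm
        have := div_pos (mul_pos L2pos l2pos) habs
        linarith
      have hk := hkey m hm0
      rw [div_lt_iff₀ habs] at hm
      nlinarith
    apply pow_of_log_eq hAnpos hn
    rw [← hLndef]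
    field_simp
    nlinarith [hX]

end powerlaw

theorem stmt2 (μ : Measure ℝ) [IsProbabilityMeasure μ]
    (hnd : ∃ t : ℝ, ‖charFun' μ t‖ < 1)
    (a b : ℕ → ℝ) (ha : ∀ n : ℕ, 0 < n → 0 < a n)
    (hstable : ∀ n : ℕ, 0 < n → ∀ t : ℝ,
      (charFun' μ t) ^ n = charFun' μ (a n * t) * Complex.exp (Complex.I * (b n) * t)) :
    ∃ α : ℝ, 0 < α ∧ α ≤ 2 ∧ (∀ n : ℕ, 0 < n → a n = (n : ℝ) ^ (1 / α)) ∧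
      ∀ a' b' c' : ℝ, ∀ d' : ℝ, 0 < a' → 0 < b' → 0 < c' →
        (∀ t : ℝ, charFun' μ (a' * t) * charFun' μ (b' * t) =
          charFun' μ (c' * t) * Complex.exp (Complex.I * d' * t)) →
        a' ^ α + b' ^ α = c' ^ α := by
  obtain ⟨t0, ht0abs⟩ := hnd
  have hgcont : Continuous (gFun μ) := continuous_gFun μ
  have hg0 : gFun μ 0 = 1 := gFun_zero μ
  have hgle : ∀ t, gFun μ t ≤ 1 := gFun_le_one μ
  have hgnn : ∀ t, 0 ≤ gFun μ t := gFun_nonneg μ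
  have hgt0 : gFun μ t0 < 1 := gFun_lt_one_of μ t0 ht0abs
  have hlt : ∃ t, gFun μ t < 1 := ⟨t0, hgt0⟩
  -- scaling identity for gFun
  have hgs : ∀ n : ℕ, 0 < n → ∀ t, gFun μ (a n * t) = gFun μ t ^ n := by
    intro n hn t
    have h1 := congrArg Complex.normSq (hstable n hn t)
    rw [map_pow, map_mul] at h1
    have h2 : Complex.normSq (Complex.exp (Complex.I * (b n) * t)) = 1 := by
      rw [show Complex.I * (b n : ℂ) * (t : ℂ) = ((b n * t : ℝ) : ℂ) * Complex.I by
        push_cast; ring]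
      rw [Complex.normSq_eq_norm_sq, Complex.norm_exp_ofReal_mul_I, one_pow]
    rw [h2, mul_one] at h1
    exact h1.symm
  have uniq : ∀ c c' : ℝ, 0 < c → 0 < c' →
      (∀ t, gFun μ (c * t) = gFun μ (c' * t)) → c = c' :=
    fun c c' hc hc' h => G_uniq hgcont hg0 hlt hc hc' h
  have ha1 : a 1 = 1 := by
    apply uniq _ _ (ha 1 one_pos) one_pos
    intro t
    rw [one_mul, hgs 1 one_pos t, pow_one]
  have hmul : ∀ m n : ℕ, 0 < m → 0 < n → a (m * n) = a m * a n := by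
    intro m n hm hn
    apply uniq _ _ (ha _ (Nat.mul_pos hm hn)) (mul_pos (ha m hm) (ha n hn))
    intro t
    rw [hgs _ (Nat.mul_pos hm hn) t, show a m * a n * t = a m * (a n * t) by ring,
      hgs m hm, hgs n hn]
    exact pow_mul' _ m n
  have hmono : ∀ m n : ℕ, 0 < m → m ≤ n → a m ≤ a n := by
    intro m n hm hmn
    by_contra hcon
    push_neg at hcon
    have hn : 0 < n := lt_of_lt_of_le hm hmn
    refine G_false_of_scale_le hgcont hg0 hlt (r := a n / a m)
      (le_of_lt (div_pos (ha n hn) (ha m hm))) ((div_lt_one (ha m hm)).mpr hcon) ?_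
    intro t
    have hamne : a m ≠ 0 := ne_of_gt (ha m hm)
    have e1 : a n / a m * t = a n * (t / a m) := by field_simp
    have e2 : a m * (t / a m) = t := by field_simp
    calc gFun μ (a n / a m * t) = gFun μ (t / a m) ^ n := by rw [e1, hgs n hn]
      _ ≤ gFun μ (t / a m) ^ m := pow_le_pow_of_le_one (hgnn _) (hgle _) hmn
      _ = gFun μ t := by rw [← hgs m hm, e2]
  have h2gt1 : 1 < a 2 := by
    rcases lt_trichotomy (a 2) 1 with hlt2 | heq2 | hgt2
    · exfalso
      have hpos2 := ha 2 (by norm_num)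
      have hgk : ∀ k : ℕ, gFun μ (a 2 ^ k * t0) = gFun μ t0 ^ 2 ^ k := by
        intro k
        induction k with
        | zero => simp
        | succ i ih =>
          rw [show a 2 ^ (i + 1) * t0 = a 2 * (a 2 ^ i * t0) by ring,
            hgs 2 (by norm_num), ih, ← pow_mul, pow_succ]
      have h1 : Tendsto (fun k : ℕ => gFun μ (a 2 ^ k * t0)) atTop (nhds 1) := by
        have hb : Tendsto (fun k : ℕ => a 2 ^ k * t0) atTop (nhds 0) := by
          simpa using (tendsto_pow_atTop_nhds_zero_of_lt_one (le_of_lt hpos2) hlt2).mul_const t0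
        simpa [hg0, Function.comp_def] using (hgcont.tendsto 0).comp hb
      have h2 : Tendsto (fun k : ℕ => gFun μ t0 ^ 2 ^ k) atTop (nhds 0) := by
        have hb := tendsto_pow_atTop_nhds_zero_of_lt_one (hgnn t0) hgt0
        exact hb.comp (tendsto_pow_atTop_atTop_of_one_lt (by norm_num))
      rw [show (fun k : ℕ => gFun μ (a 2 ^ k * t0)) = fun k => gFun μ t0 ^ 2 ^ k from
        funext hgk] at h1
      have := tendsto_nhds_unique h1 h2
      norm_num at this
    · exfalso
      have hdich : ∀ t, gFun μ t = 0 ∨ gFun μ t = 1 := by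
        intro t
        have h1 := hgs 2 (by norm_num) t
        rw [heq2, one_mul] at h1
        have h2 : gFun μ t * (gFun μ t - 1) = 0 := by nlinarith [h1]
        rcases mul_eq_zero.1 h2 with h | h
        · exact Or.inl h
        · exact Or.inr (by linarith)
      set S : Set ℝ := gFun μ ⁻¹' {1} with hS
      have hSclosed : IsClosed S := IsClosed.preimage hgcont isClosed_singleton
      have hSopen : IsOpen S := by
        have hSeq : S = gFun μ ⁻¹' (Set.Ioi (1/2 : ℝ)) := by
          ext t
          simp only [hS, Set.mem_preimage, Set.mem_singleton_iff, Set.mem_Ioi]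
          constructor
          · intro h; rw [h]; norm_num
          · intro h
            rcases hdich t with h' | h'
            · rw [h'] at h; norm_num at h
            · exact h'
        rw [hSeq]
        exact hgcont.isOpen_preimage _ isOpen_Ioi
      have huniv : S = Set.univ := by
        rcases isClopen_iff.1 ⟨hSclosed, hSopen⟩ with h | h
        · exfalso
          rw [Set.eq_empty_iff_forall_notMem] at h
          exact h 0 (by simp [hS, hg0])
        · exact h
      have ht01 : gFun μ t0 = 1 := by
        have hm : t0 ∈ S := huniv ▸ Set.mem_univ t0
        simpa [hS] using hm
      linarith
    · exact hgt2
  -- positivity of gFun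
  have gpos : ∀ t, 0 < gFun μ t := by
    have hcont0 : ContinuousAt (gFun μ) 0 := hgcont.continuousAt
    have hmem : gFun μ ⁻¹' (Set.Ioi (0:ℝ)) ∈ nhds (0:ℝ) := by
      apply hcont0
      rw [hg0]
      exact Ioi_mem_nhds one_pos
    obtain ⟨δ, hδpos, hδ⟩ := Metric.mem_nhds_iff.1 hmem
    intro t
    have ha2k : ∀ k : ℕ, a (2 ^ k) = a 2 ^ k := by
      intro k
      induction k with
      | zero => simpa using ha1
      | succ i ih =>
        rw [pow_succ, hmul (2 ^ i) 2 (by positivity) (by norm_num), ih, pow_succ]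
    obtain ⟨k, hk⟩ := pow_unbounded_of_one_lt (|t| / δ) h2gt1
    have ha2pos : (0:ℝ) < a 2 := lt_trans one_pos h2gt1
    have hpos2k : (0:ℝ) < a 2 ^ k := pow_pos ha2pos k
    have hu : |t / a 2 ^ k| < δ := by
      rw [abs_div, abs_of_pos hpos2k, div_lt_iff₀ hpos2k]
      calc |t| = |t| / δ * δ := by field_simp
        _ < a 2 ^ k * δ := mul_lt_mul_of_pos_right hk hδpos
        _ = δ * a 2 ^ k := by ring
    have hgu : 0 < gFun μ (t / a 2 ^ k) := by
      have hmem2 : t / a 2 ^ k ∈ Metric.ball (0:ℝ) δ := by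
        rw [Metric.mem_ball, Real.dist_eq, sub_zero]
        exact hu
      exact hδ hmem2
    have heq : gFun μ t = gFun μ (t / a 2 ^ k) ^ 2 ^ k := by
      rw [← hgs (2 ^ k) (by positivity) (t / a 2 ^ k), ha2k k,
        show a 2 ^ k * (t / a 2 ^ k) = t by field_simp]
    rw [heq]
    exact pow_pos hgu _
  -- the exponent function h
  set h : ℝ → ℝ := fun t => - Real.log (gFun μ t) with hhdef
  have hconth : Continuous h := by
    apply Continuous.neg
    rw [continuous_iff_continuousAt]
    intro t
    exact (Real.continuousAt_log (ne_of_gt (gpos t))).comp hgcont.continuousAt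
  have hh0 : h 0 = 0 := by simp [hhdef, hg0]
  have hhs : ∀ n : ℕ, 0 < n → ∀ t, h (a n * t) = n * h t := by
    intro n hn t
    simp only [hhdef]
    rw [hgs n hn t, Real.log_pow]
    ring
  have hht0 : 0 < h t0 := by
    simp only [hhdef]
    have := Real.log_neg (gpos t0) hgt0
    linarith
  set c : ℝ := Real.log (a 2) / Real.log 2 with hcdef
  have l2pos : (0:ℝ) < Real.log 2 := Real.log_pos (by norm_num)
  have hcpos : 0 < c := div_pos (Real.log_pos h2gt1) l2pos
  have hanc : ∀ n : ℕ, 0 < n → a n = (n:ℝ) ^ c := power_law ha ha1 hmul hmono h2gt1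
  have hdiv : ∀ n : ℕ, 0 < n → ∀ u, h (u / a n) = h u / n := by
    intro n hn u
    have hnne : (n:ℝ) ≠ 0 := Nat.cast_ne_zero.mpr hn.ne'
    have h1 := hhs n hn (u / a n)
    rw [show a n * (u / a n) = u by field_simp [ne_of_gt (ha n hn)]] at h1
    rw [h1, mul_comm, mul_div_assoc, div_self hnne, mul_one]
  have hratio : ∀ m n : ℕ, 0 < m → 0 < n → ∀ t,
      h (((m:ℝ) / n) ^ c * t) = ((m:ℝ) / n) * h t := by
    intro m n hm hn t
    have e1 : ((m:ℝ) / n) ^ c = a m / a n := by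
      rw [hanc m hm, hanc n hn, ← Real.div_rpow (Nat.cast_nonneg m) (Nat.cast_nonneg n)]
    rw [e1, show a m / a n * t = a m * (t / a n) by ring, hhs m hm, hdiv n hn t]
    ring
  have hscale : ∀ x : ℝ, 0 < x → ∀ t, h (x ^ c * t) = x * h t := by
    intro x hx t
    have hq : Tendsto (fun j : ℕ => (⌈(j:ℝ) * x⌉₊ : ℝ) / j) atTop (nhds x) := by
      have hup : Tendsto (fun j : ℕ => x + 1/(j:ℝ)) atTop (nhds x) := by
        simpa using (tendsto_const_nhds (x := x) (f := (atTop : Filter ℕ))).add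
          tendsto_one_div_atTop_nhds_zero_nat
      apply tendsto_of_tendsto_of_tendsto_of_le_of_le'
        (tendsto_const_nhds : Tendsto (fun _ : ℕ => x) atTop (nhds x)) hup
      · filter_upwards [eventually_gt_atTop 0] with j hj
        have hjpos : (0:ℝ) < j := by exact_mod_cast hj
        rw [le_div_iff₀ hjpos]
        calc x * j = (j:ℝ) * x := by ring
          _ ≤ (⌈(j:ℝ) * x⌉₊ : ℝ) := Nat.le_ceil _
      · filter_upwards [eventually_gt_atTop 0] with j hj
        have hjpos : (0:ℝ) < j := by exact_mod_cast hj
        rw [div_le_iff₀ hjpos]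
        have hcl : (⌈(j:ℝ) * x⌉₊ : ℝ) < (j:ℝ) * x + 1 :=
          Nat.ceil_lt_add_one (by positivity)
        calc (⌈(j:ℝ) * x⌉₊ : ℝ) ≤ (j:ℝ) * x + 1 := le_of_lt hcl
          _ = (x + 1/j) * j := by field_simp
    have hLHS : Tendsto (fun j : ℕ => h (((⌈(j:ℝ) * x⌉₊ : ℝ) / j) ^ c * t)) atTop
        (nhds (h (x ^ c * t))) := by
      have h1 : Tendsto (fun j : ℕ => ((⌈(j:ℝ) * x⌉₊ : ℝ) / j) ^ c) atTop (nhds (x ^ c)) :=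
        ((Real.continuousAt_rpow_const x c (Or.inl (ne_of_gt hx))).tendsto).comp hq
      exact (hconth.continuousAt.tendsto).comp (h1.mul_const t)
    have hRHS : Tendsto (fun j : ℕ => ((⌈(j:ℝ) * x⌉₊ : ℝ) / j) * h t) atTop
        (nhds (x * h t)) := hq.mul_const _
    have hev : (fun j : ℕ => h (((⌈(j:ℝ) * x⌉₊ : ℝ) / j) ^ c * t))
        =ᶠ[atTop] fun j : ℕ => ((⌈(j:ℝ) * x⌉₊ : ℝ) / j) * h t := by
      filter_upwards [eventually_gt_atTop 0] with j hj
      refine hratio ⌈(j:ℝ) * x⌉₊ j ?_ hj t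
      rw [Nat.ceil_pos]
      exact mul_pos (by exact_mod_cast hj) hx
    exact tendsto_nhds_unique (Tendsto.congr' hev hLHS) hRHS
  set α : ℝ := 1 / c with hαdef
  have hαpos : 0 < α := one_div_pos.mpr hcpos
  have hyscale : ∀ y : ℝ, 0 < y → ∀ t, h (y * t) = y ^ α * h t := by
    intro y hy t
    have hxp : (0:ℝ) < y ^ α := Real.rpow_pos_of_pos hy α
    have e : (y ^ α) ^ c = y := by
      rw [← Real.rpow_mul (le_of_lt hy), hαdef, one_div,
        inv_mul_cancel₀ (ne_of_gt hcpos), Real.rpow_one]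
    have hsc := hscale (y ^ α) hxp t
    rw [e] at hsc
    rw [hsc]
  have heven : ∀ t, h (-t) = h t := by
    intro t
    simp only [hhdef]
    rw [gFun_neg]
  have hh1 : 0 < h 1 := by
    rcases lt_trichotomy t0 0 with ht | ht | ht
    · have h1 := hyscale (-t0) (by linarith) 1
      rw [mul_one, heven t0] at h1
      have hA : (0:ℝ) < (-t0) ^ α := Real.rpow_pos_of_pos (by linarith) α
      nlinarith [h1, hA, hht0]
    · exfalso
      rw [ht, hh0] at hht0
      exact lt_irrefl 0 hht0
    · have h1 := hyscale t0 ht 1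
      rw [mul_one] at h1
      have hA : (0:ℝ) < t0 ^ α := Real.rpow_pos_of_pos ht α
      nlinarith [h1, hA, hht0]
  have hcge : 1/2 ≤ c := by
    by_contra hcon
    push_neg at hcon
    have hα2 : 2 < α := by
      rw [hαdef, lt_div_iff₀ hcpos]
      linarith
    refine moment_contradiction μ t0 hgt0 α (h 1) hα2 (le_of_lt hh1) ?_
    intro s hs
    have h1 : h s = s ^ α * h 1 := by
      have := hyscale s hs 1
      rwa [mul_one] at this
    have h2 : 1 - gFun μ s ≤ h s := by
      have hls := Real.log_le_sub_one_of_pos (gpos s)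
      simp only [hhdef]
      linarith
    calc 1 - gFun μ s ≤ h s := h2
      _ = s ^ α * h 1 := h1
      _ = h 1 * s ^ α := mul_comm _ _
  refine ⟨α, hαpos, ?_, ?_, ?_⟩
  · rw [hαdef, div_le_iff₀ hcpos]
    linarith
  · intro n hn
    rw [show (1:ℝ) / α = c by rw [hαdef, one_div_one_div]]
    exact hanc n hn
  · intro a' b' c' d' ha' hb' hc' hid
    have hgid : ∀ t : ℝ, gFun μ (a' * t) * gFun μ (b' * t) = gFun μ (c' * t) := by
      intro t
      have h1 := congrArg Complex.normSq (hid t)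
      rw [map_mul, map_mul] at h1
      have h2 : Complex.normSq (Complex.exp (Complex.I * (d' : ℂ) * (t : ℂ))) = 1 := by
        rw [show Complex.I * (d' : ℂ) * (t : ℂ) = ((d' * t : ℝ) : ℂ) * Complex.I by
          push_cast; ring]
        rw [Complex.normSq_eq_norm_sq, Complex.norm_exp_ofReal_mul_I, one_pow]
      rw [h2, mul_one] at h1
      exact h1
    have hsum : h a' + h b' = h c' := by
      have e := hgid 1
      rw [mul_one, mul_one, mul_one] at e
      have e2 : Real.log (gFun μ a' * gFun μ b') = Real.log (gFun μ c') := by rw [e]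
      rw [Real.log_mul (ne_of_gt (gpos a')) (ne_of_gt (gpos b'))] at e2
      simp only [hhdef]
      linarith
    have e1 : h a' = a' ^ α * h 1 := by
      have := hyscale a' ha' 1; rwa [mul_one] at this
    have e2 : h b' = b' ^ α * h 1 := by
      have := hyscale b' hb' 1; rwa [mul_one] at this
    have e3 : h c' = c' ^ α * h 1 := by
      have := hyscale c' hc' 1; rwa [mul_one] at this
    rw [e1, e2, e3] at hsum
    have hfin : (a' ^ α + b' ^ α) * h 1 = c' ^ α * h 1 := by linarith
    exact mul_right_cancel₀ (ne_of_gt hh1) hfin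
end

section
/- Let μ be a probability measure on ℝ whose characteristic function is φ(t) = exp(ψ_{α,c,β,m}(t)) with 0 < α ≤ 2, c ≥ 0, |β| ≤ 1, m ∈ ℝ. Then for every positive integer n: if α ≠ 1, the n-fold convolution μ^{*n} equals the pushforward of μ under the map x ↦ n^{1/α} x + m(n − n^{1/α}); and if α = 1, μ^{*n} equals the pushforward of μ under the map x ↦ n x + (2/π) c β n log n. -/
open MeasureTheory Complex Filter
open scoped Topology

/-- The `n`-fold convolution of a measure on ℝ, as the law of the sum of `n`
independent copies. -/
noncomputable def convPow (μ : Measure ℝ) (n : ℕ) : Measure ℝ :=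
  Measure.map (fun x : Fin n → ℝ => ∑ i, x i) (Measure.pi fun _ => μ)

/-- The logarithm `ψ_{α,c,β,m}(t)` of the stable characteristic function. -/
noncomputable def stablePsi (α c β m : ℝ) (t : ℝ) : ℂ :=
  Complex.I * m * t - ((|c * t| ^ α : ℝ) : ℂ) *
    (1 - Complex.I * β * Real.sign t *
      ((if α = 1 then -(2 / Real.pi) * Real.log |t| else Real.tan (Real.pi * α / 2) : ℝ) : ℂ))

/- ### Auxiliary: smooth compactly supported functions are Schwartz -/

noncomputable def mkSchwartz (f : ℝ → ℂ) (h1 : ContDiff ℝ ((⊤:ℕ∞):WithTop ℕ∞) f) (h2 : HasCompactSupport f) :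
    SchwartzMap ℝ ℂ where
  toFun := f
  smooth' := h1
  decay' := by
    intro k n
    have hc : Continuous fun x : ℝ => ‖x‖ ^ k * ‖iteratedFDeriv ℝ n f x‖ :=
      ((continuous_norm.pow k).mul
        (h1.continuous_iteratedFDeriv (by exact_mod_cast le_top)).norm)
    have hs : HasCompactSupport fun x : ℝ => ‖x‖ ^ k * ‖iteratedFDeriv ℝ n f x‖ :=
      ((h2.iteratedFDeriv n).norm).mul_left
    obtain ⟨C, hC⟩ := hc.bounded_above_of_compact_support hs
    exact ⟨C, fun x => (Real.le_norm_self _).trans (hC x)⟩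

@[simp] lemma norm_exp_I_mul_ofReal_mul_ofReal (a b : ℝ) :
    ‖Complex.exp (Complex.I * a * b)‖ = 1 := by
  rw [Complex.norm_exp]
  simp [Complex.mul_re]

/- ### Parseval-type identity -/

lemma integral_schwartz_eq_integral_charFun (μ : Measure ℝ) [IsProbabilityMeasure μ]
    (f : SchwartzMap ℝ ℂ) :
    ∫ x, f x ∂μ = ∫ t, charFun' μ (2 * Real.pi * t) *
      (SchwartzMap.fourierTransformCLM ℂ f) t := by
  set g := SchwartzMap.fourierTransformCLM ℂ f with hg
  have hgc : ⇑g = FourierTransform.fourier ⇑f := rfl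
  have hginv : ∀ x : ℝ, f x =
      ∫ t : ℝ, Complex.exp (Complex.I * ((2 * Real.pi * t : ℝ) : ℂ) * (x : ℂ)) * g t := by
    intro x
    have h1 : FourierTransformInv.fourierInv (FourierTransform.fourier ⇑f) x = f x :=
      (f.integrable).fourierInv_fourier_eq (by rw [← hgc]; exact g.integrable)
        f.continuous.continuousAt
    rw [← h1, Real.fourierInv_eq, ← hgc]
    refine integral_congr_ae (Filter.Eventually.of_forall fun t => ?_)
    dsimp only
    rw [Circle.smul_def, Real.fourierChar_apply]
    show (Complex.exp (↑(2 * Real.pi * (inner ℝ t x : ℝ)) * Complex.I)) • g t = _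
    have : (inner ℝ t x : ℝ) = t * x := by
      simp [RCLike.inner_apply, mul_comm]
    rw [this, smul_eq_mul]
    congr 1
    push_cast
    ring
  have hcont : Continuous fun p : ℝ × ℝ =>
      Complex.exp (Complex.I * ((2 * Real.pi * p.2 : ℝ) : ℂ) * (p.1 : ℂ)) := by
    apply Complex.continuous_exp.comp
    fun_prop
  have hint : Integrable (Function.uncurry fun x t : ℝ =>
      Complex.exp (Complex.I * ((2 * Real.pi * t : ℝ) : ℂ) * (x : ℂ)) * g t)
      (μ.prod volume) := by
    apply Integrable.bdd_mul
    · have : Integrable (fun p : ℝ × ℝ => (1 : ℂ) * g p.2) (μ.prod volume) :=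
        (integrable_const (1:ℂ)).mul_prod g.integrable
      simpa using this
    · exact hcont.aestronglyMeasurable
    · exact Filter.Eventually.of_forall fun p => le_of_eq (norm_exp_I_mul_ofReal_mul_ofReal _ _)
  calc ∫ x, f x ∂μ
      = ∫ x : ℝ, ∫ t : ℝ, Complex.exp (Complex.I * ((2 * Real.pi * t : ℝ) : ℂ) * (x : ℂ)) * g t ∂volume ∂μ :=
        integral_congr_ae (Filter.Eventually.of_forall hginv)
    _ = ∫ t : ℝ, ∫ x : ℝ, Complex.exp (Complex.I * ((2 * Real.pi * t : ℝ) : ℂ) * (x : ℂ)) * g t ∂μ ∂volume :=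
        integral_integral_swap hint
    _ = ∫ t : ℝ, charFun' μ (2 * Real.pi * t) * g t := by
        refine integral_congr_ae (Filter.Eventually.of_forall fun t => ?_)
        dsimp only
        rw [integral_mul_const]
        rfl

/- ### Uniqueness from equality of characteristic functions -/

theorem ext_of_charFun' (μ ν : Measure ℝ) [IsProbabilityMeasure μ] [IsProbabilityMeasure ν]
    (h : ∀ t, charFun' μ t = charFun' ν t) : μ = ν := by
  refine Measure.ext_of_Iic μ ν fun a => ?_
  let B : (n : ℕ) → ContDiffBump ((a - ((n : ℝ) + 1)) : ℝ) := fun n =>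
    ⟨(n : ℝ) + 1, (n : ℝ) + 1 + 1 / ((n : ℝ) + 1), by positivity,
      lt_add_of_pos_right _ (by positivity)⟩
  let F : ℕ → ℝ → ℝ := fun n x => B n x
  -- the integrals of the bumps agree for μ and ν
  have key : ∀ n : ℕ, ∫ x, F n x ∂μ = ∫ x, F n x ∂ν := by
    intro n
    have hsm : ContDiff ℝ ((⊤ : ℕ∞) : WithTop ℕ∞) (fun x : ℝ => ((F n x : ℝ) : ℂ)) :=
      Complex.ofRealCLM.contDiff.comp ((B n).contDiff)
    have hcs : HasCompactSupport (fun x : ℝ => ((F n x : ℝ) : ℂ)) :=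
      ((B n).hasCompactSupport).comp_left (g := fun r : ℝ => (r : ℂ)) Complex.ofReal_zero
    set S := mkSchwartz (fun x : ℝ => ((F n x : ℝ) : ℂ)) hsm hcs with hS
    have hSx : ∀ x, S x = ((F n x : ℝ) : ℂ) := fun x => rfl
    have h1 : ∫ x, S x ∂μ = ∫ x, S x ∂ν := by
      rw [integral_schwartz_eq_integral_charFun μ S, integral_schwartz_eq_integral_charFun ν S]
      refine integral_congr_ae (Filter.Eventually.of_forall fun t => ?_)
      dsimp only
      rw [h]
    have hInt : ∀ (ρ : Measure ℝ) [IsProbabilityMeasure ρ], Integrable (F n) ρ := by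
      intro ρ _
      exact ((B n).continuous).integrable_of_hasCompactSupport (B n).hasCompactSupport
    have h2 : ∀ (ρ : Measure ℝ) [IsProbabilityMeasure ρ],
        ∫ x, S x ∂ρ = ((∫ x, F n x ∂ρ : ℝ) : ℂ) := by
      intro ρ _
      rw [show (fun x => S x) = (fun x => Complex.ofRealCLM (F n x)) from rfl]
      exact ContinuousLinearMap.integral_comp_comm _ (hInt ρ)
    rw [h2 μ, h2 ν] at h1
    exact_mod_cast h1
  -- the integrals of the bumps converge to the measure of `Iic a`
  have lim : ∀ (ρ : Measure ℝ) [IsProbabilityMeasure ρ],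
      Tendsto (fun n => ∫ x, F n x ∂ρ) atTop (𝓝 ((ρ (Set.Iic a)).toReal)) := by
    intro ρ _
    have hind : ∫ x, Set.indicator (Set.Iic a) (fun _ => (1 : ℝ)) x ∂ρ
        = (ρ (Set.Iic a)).toReal := by
      rw [integral_indicator_const (1 : ℝ) measurableSet_Iic, smul_eq_mul, mul_one]
      rfl
    rw [← hind]
    apply tendsto_integral_of_dominated_convergence (bound := fun _ => (1 : ℝ))
    · exact fun n => ((B n).continuous).aestronglyMeasurable
    · exact integrable_const 1
    · intro n
      refine Filter.Eventually.of_forall fun x => ?_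
      rw [Real.norm_eq_abs, _root_.abs_of_nonneg (B n).nonneg]
      exact (B n).le_one
    · refine Filter.Eventually.of_forall fun x => ?_
      by_cases hx : x ≤ a
      · have : Set.indicator (Set.Iic a) (fun _ => (1 : ℝ)) x = 1 := by
          simp [Set.indicator_of_mem, hx]
        rw [this]
        refine tendsto_const_nhds.congr' ?_
        filter_upwards [eventually_ge_atTop ⌈(a - x) / 2⌉₊] with n hn
        refine ((B n).one_of_mem_closedBall ?_).symm
        rw [Metric.mem_closedBall, Real.dist_eq, abs_le]
        have h2n : (a - x) / 2 ≤ (n : ℝ) := (Nat.le_ceil _).trans (by exact_mod_cast hn)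
        have hrIn : (B n).rIn = (n : ℝ) + 1 := rfl
        rw [hrIn]
        constructor <;> [linarith; linarith]
      · push_neg at hx
        have : Set.indicator (Set.Iic a) (fun _ => (1 : ℝ)) x = 0 := by
          simp [Set.indicator_of_notMem, hx.not_ge]
        rw [this]
        refine tendsto_const_nhds.congr' ?_
        filter_upwards [eventually_ge_atTop ⌈1 / (x - a)⌉₊] with n hn
        refine ((B n).zero_of_le_dist ?_).symm
        have hxa : 0 < x - a := by linarith
        have h2n : 1 / (x - a) ≤ (n : ℝ) + 1 := by
          have := (Nat.le_ceil (1 / (x - a))).trans (by exact_mod_cast hn : (⌈1 / (x - a)⌉₊ : ℝ) ≤ n)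
          linarith
        have h3 : 1 / ((n : ℝ) + 1) ≤ x - a := by
          rw [div_le_iff₀ (by positivity)]
          rw [div_le_iff₀ hxa] at h2n
          linarith [h2n]
        rw [Real.dist_eq, _root_.abs_of_nonneg (by linarith : (0:ℝ) ≤ x - (a - ((n:ℝ)+1)))]
        show (n : ℝ) + 1 + 1 / ((n : ℝ) + 1) ≤ _
        linarith
  have := tendsto_nhds_unique ((lim μ).congr' (Filter.Eventually.of_forall key)) (lim ν)
  exact ((ENNReal.toReal_eq_toReal_iff' (measure_ne_top μ _) (measure_ne_top ν _)).mp this)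

/- ### Characteristic function computations -/

lemma charFun'_convPow (μ : Measure ℝ) [IsProbabilityMeasure μ] (n : ℕ) (t : ℝ) :
    charFun' (convPow μ n) t = charFun' μ t ^ n := by
  have hmeas : Measurable fun x : Fin n → ℝ => ∑ i, x i :=
    Finset.measurable_sum _ fun i _ => measurable_pi_apply i
  rw [convPow, charFun', integral_map hmeas.aemeasurable
    (Continuous.aestronglyMeasurable (by fun_prop))]
  have hexp : ∀ x : Fin n → ℝ, Complex.exp (Complex.I * t * ((∑ i, x i : ℝ) : ℂ))
      = ∏ i, Complex.exp (Complex.I * t * (x i : ℂ)) := by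
    intro x
    rw [← Complex.exp_sum]
    congr 1
    push_cast
    rw [Finset.mul_sum]
  simp_rw [hexp]
  letI : MeasureSpace ℝ := ⟨μ⟩
  have : (Measure.pi fun _ : Fin n => μ) = (volume : Measure (Fin n → ℝ)) :=
    (volume_pi).symm
  rw [this]
  rw [← this, integral_fintype_prod_eq_prod (𝕜 := ℂ) (ι := Fin n) (E := fun _ => ℝ) (fun _ x => Complex.exp (Complex.I * t * (x : ℂ)))]
  rw [Finset.prod_const, Finset.card_univ, Fintype.card_fin]
  rfl

lemma charFun'_map_affine (μ : Measure ℝ) (a b t : ℝ) :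
    charFun' (Measure.map (fun x : ℝ => a * x + b) μ) t
      = Complex.exp (Complex.I * t * b) * charFun' μ (a * t) := by
  have hmeas : Measurable fun x : ℝ => a * x + b := by fun_prop
  rw [charFun', integral_map hmeas.aemeasurable
    (Continuous.aestronglyMeasurable (by fun_prop)), charFun']
  have : ∀ x : ℝ, Complex.exp (Complex.I * t * ((a * x + b : ℝ) : ℂ))
      = Complex.exp (Complex.I * t * b) * Complex.exp (Complex.I * ((a * t : ℝ) : ℂ) * x) := by
    intro x
    rw [← Complex.exp_add]
    congr 1
    push_cast
    ring
  simp_rw [this]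
  rw [integral_const_mul]

/- ### Algebra of `stablePsi` -/

lemma real_sign_mul_pos {a : ℝ} (ha : 0 < a) (t : ℝ) : Real.sign (a * t) = Real.sign t := by
  rcases lt_trichotomy t 0 with h | h | h
  · rw [Real.sign_of_neg h, Real.sign_of_neg (mul_neg_of_pos_of_neg ha h)]
  · simp [h]
  · rw [Real.sign_of_pos h, Real.sign_of_pos (mul_pos ha h)]

lemma abs_mul_real_sign {c : ℝ} (hc : 0 ≤ c) (t : ℝ) : |c * t| * Real.sign t = c * t := by
  rcases lt_trichotomy t 0 with h | h | h
  · rw [Real.sign_of_neg h, abs_mul, _root_.abs_of_nonneg hc, abs_of_neg h]; ring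
  · simp [h]
  · rw [Real.sign_of_pos h, abs_mul, _root_.abs_of_nonneg hc, abs_of_pos h]; ring

lemma psi_scale_ne_one (α c β m : ℝ) (hα : 0 < α) (hα1 : α ≠ 1) (hc : 0 ≤ c)
    (n : ℕ) (hn : 0 < n) (t : ℝ) :
    (n : ℂ) * stablePsi α c β m t =
      stablePsi α c β m ((n : ℝ) ^ (1 / α) * t) +
        Complex.I * ((m * ((n : ℝ) - (n : ℝ) ^ (1 / α)) : ℝ) : ℂ) * (t : ℂ) := by
  have hnR : (0 : ℝ) < n := by exact_mod_cast hn
  set a : ℝ := (n : ℝ) ^ (1 / α) with ha_def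
  have ha : 0 < a := Real.rpow_pos_of_pos hnR _
  have h1 : Real.sign (a * t) = Real.sign t := real_sign_mul_pos ha t
  have h2 : (|c * (a * t)| ^ α : ℝ) = (n : ℝ) * |c * t| ^ α := by
    rw [show c * (a * t) = a * (c * t) by ring, abs_mul, abs_of_pos ha,
      Real.mul_rpow ha.le (abs_nonneg _), ha_def, ← Real.rpow_mul hnR.le,
      one_div_mul_cancel hα.ne', Real.rpow_one]
  rw [stablePsi, stablePsi]
  simp only [if_neg hα1]
  rw [h1, h2]
  push_cast
  ring

lemma psi_scale_one (c β m : ℝ) (hc : 0 ≤ c) (n : ℕ) (hn : 0 < n) (t : ℝ) :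
    (n : ℂ) * stablePsi 1 c β m t =
      stablePsi 1 c β m ((n : ℝ) * t) +
        Complex.I * ((2 / Real.pi * c * β * n * Real.log n : ℝ) : ℂ) * (t : ℂ) := by
  have hnR : (0 : ℝ) < n := by exact_mod_cast hn
  rw [stablePsi, stablePsi, if_pos rfl, if_pos rfl, Real.rpow_one, Real.rpow_one]
  rcases eq_or_ne t 0 with rfl | ht
  · simp
  · have h1 : Real.sign ((n : ℝ) * t) = Real.sign t := real_sign_mul_pos hnR t
    have h2 : |c * ((n : ℝ) * t)| = (n : ℝ) * |c * t| := by
      rw [show c * ((n : ℝ) * t) = (n : ℝ) * (c * t) by ring, abs_mul, abs_of_pos hnR]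
    have h3 : Real.log |(n : ℝ) * t| = Real.log n + Real.log |t| := by
      rw [abs_mul, abs_of_pos hnR, Real.log_mul hnR.ne' (abs_ne_zero.mpr ht)]
    have h4 : ((|c * t| : ℝ) : ℂ) * ((Real.sign t : ℝ) : ℂ) = ((c : ℝ) : ℂ) * ((t : ℝ) : ℂ) := by
      exact_mod_cast congrArg (Complex.ofReal) (abs_mul_real_sign hc t)
  
    rw [h1, h2, h3]
    set K := Real.log (n : ℝ) with hK
    push_cast
    linear_combination (Complex.I * β * (2 / (Real.pi : ℂ)) * (n : ℂ) * (Real.log n : ℂ)) * h4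

/- ### Main theorem -/

theorem stmt3 (μ : Measure ℝ) [IsProbabilityMeasure μ] (α c β m : ℝ)
    (hα : 0 < α) (hα2 : α ≤ 2) (hc : 0 ≤ c) (hβ : |β| ≤ 1)
    (hφ : ∀ t : ℝ, charFun' μ t = Complex.exp (stablePsi α c β m t)) :
    ∀ n : ℕ, 0 < n →
      (α ≠ 1 → convPow μ n =
        Measure.map (fun x : ℝ => (n : ℝ) ^ (1 / α) * x + m * ((n : ℝ) - (n : ℝ) ^ (1 / α))) μ) ∧
      (α = 1 → convPow μ n =
        Measure.map (fun x : ℝ => (n : ℝ) * x + (2 / Real.pi) * c * β * n * Real.log n) μ) := by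
  intro n hn
  have hsum : Measurable fun x : Fin n → ℝ => ∑ i, x i :=
    Finset.measurable_sum _ fun i _ => measurable_pi_apply i
  haveI hconv : IsProbabilityMeasure (convPow μ n) := by
    rw [convPow]; exact Measure.isProbabilityMeasure_map hsum.aemeasurable
  have main : ∀ a b : ℝ,
      (∀ t : ℝ, (n : ℂ) * stablePsi α c β m t =
        stablePsi α c β m (a * t) + Complex.I * ((b : ℝ) : ℂ) * (t : ℂ)) →
      convPow μ n = Measure.map (fun x : ℝ => a * x + b) μ := by
    intro a b hpsi
    haveI : IsProbabilityMeasure (Measure.map (fun x : ℝ => a * x + b) μ) :=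
      Measure.isProbabilityMeasure_map (by fun_prop : Measurable fun x : ℝ => a * x + b).aemeasurable
    apply ext_of_charFun'
    intro t
    rw [charFun'_convPow, charFun'_map_affine, hφ, hφ, ← Complex.exp_nat_mul,
      hpsi t, Complex.exp_add, ← Complex.exp_add, ← Complex.exp_add]
    congr 1
    ring
  constructor
  · intro hα1
    exact main _ _ fun t => psi_scale_ne_one α c β m hα hα1 hc n hn t
  · intro hα1
    subst hα1
    have := main (n : ℝ) (2 / Real.pi * c * β * n * Real.log n)
      (fun t => psi_scale_one c β m hc n hn t)
    simpa using this
end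

section
/- For 0 < α < 1 and every real t, the function x ↦ (e^{itx} − 1)·x^{−α−1} is Bochner integrable on (0, ∞) and ∫₀^∞ (e^{itx} − 1) x^{−α−1} dx = −K(α)·|t|^α·(1 − i sign(t) tan(πα/2)), where K(α) = −Γ(−α) cos(πα/2). -/
open MeasureTheory Complex Filter Set Topology

noncomputable def Jint (α : ℝ) (z : ℂ) : ℂ :=
  ∫ x in Set.Ioi (0:ℝ), (Complex.exp (z * x) - 1) * ((x ^ (-α - 1) : ℝ) : ℂ)

lemma rpow_aux {α x : ℝ} (hx : 0 < x) : x * x ^ (-α - 1) = x ^ (-α) := by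
  rw [show -α - 1 = -α + (-1) by ring, Real.rpow_add hx, Real.rpow_neg_one]
  field_simp

lemma contOn (α : ℝ) (z : ℂ) :
    ContinuousOn (fun x : ℝ => (Complex.exp (z * x) - 1) * ((x ^ (-α - 1) : ℝ) : ℂ))
      (Set.Ioi 0) := by
  apply ContinuousOn.mul
  · exact (((continuous_const.mul Complex.continuous_ofReal).cexp).sub
      continuous_const).continuousOn
  · intro x hx
    exact (Complex.continuous_ofReal.continuousAt.comp
      (Real.continuousAt_rpow_const x _ (Or.inl (ne_of_gt hx)))).continuousWithinAt

lemma contOn' (α : ℝ) (z : ℂ) :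
    ContinuousOn (fun x : ℝ => ((x:ℂ) * Complex.exp (z * x)) * ((x ^ (-α - 1) : ℝ) : ℂ))
      (Set.Ioi 0) := by
  apply ContinuousOn.mul
  · exact (Complex.continuous_ofReal.mul
      ((continuous_const.mul Complex.continuous_ofReal).cexp)).continuousOn
  · intro x hx
    exact (Complex.continuous_ofReal.continuousAt.comp
      (Real.continuousAt_rpow_const x _ (Or.inl (ne_of_gt hx)))).continuousWithinAt

lemma boundInt (α c : ℝ) (hα : 0 < α) (hα1 : α < 1) (hc : 0 ≤ c) :
    IntegrableOn (fun x : ℝ => min (2*c*x) 2 * x ^ (-α - 1)) (Set.Ioi 0) := by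
  have hmeas : ContinuousOn (fun x : ℝ => min (2*c*x) 2 * x ^ (-α - 1)) (Set.Ioi 0) := by
    apply ContinuousOn.mul
    · exact ((continuous_const.mul continuous_id).min continuous_const).continuousOn
    · intro x hx
      exact (Real.continuousAt_rpow_const x _ (Or.inl (ne_of_gt hx))).continuousWithinAt
  rw [← Set.Ioc_union_Ioi_eq_Ioi (zero_le_one : (0:ℝ) ≤ 1)]
  apply IntegrableOn.union
  · have h0 : IntegrableOn (fun x : ℝ => x ^ (-α)) (Set.Ioc 0 1) := by
      rw [integrableOn_Ioc_iff_integrableOn_Ioo]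
      exact (intervalIntegral.integrableOn_Ioo_rpow_iff one_pos).2 (by linarith)
    have h1 : IntegrableOn (fun x : ℝ => 2*c * x ^ (-α)) (Set.Ioc 0 1) := h0.const_mul _
    refine Integrable.mono h1
      ((hmeas.mono Set.Ioc_subset_Ioi_self).aestronglyMeasurable measurableSet_Ioc) ?_
    filter_upwards [ae_restrict_mem measurableSet_Ioc] with x hx
    have hx0 : 0 < x := hx.1
    have hr : (0:ℝ) ≤ x ^ (-α - 1) := Real.rpow_nonneg hx0.le _
    have hmin0 : 0 ≤ min (2*c*x) 2 := le_min (by positivity) (by norm_num)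
    rw [Real.norm_eq_abs, Real.norm_eq_abs, _root_.abs_of_nonneg (by positivity),
      _root_.abs_of_nonneg (by positivity)]
    calc min (2*c*x) 2 * x ^ (-α - 1) ≤ (2*c*x) * x ^ (-α - 1) :=
          mul_le_mul_of_nonneg_right (min_le_left _ _) hr
      _ = 2*c * (x * x ^ (-α-1)) := by ring
      _ = 2*c * x ^ (-α) := by rw [rpow_aux hx0]
  · have h2 : IntegrableOn (fun x : ℝ => 2 * x ^ (-α-1)) (Set.Ioi 1) :=
      (integrableOn_Ioi_rpow_of_lt (by linarith) one_pos).const_mul 2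
    refine Integrable.mono h2
      ((hmeas.mono (Set.Ioi_subset_Ioi zero_le_one)).aestronglyMeasurable measurableSet_Ioi) ?_
    filter_upwards [ae_restrict_mem measurableSet_Ioi] with x hx
    have hx0 : (0:ℝ) < x := lt_trans one_pos hx
    have hr : (0:ℝ) ≤ x ^ (-α - 1) := Real.rpow_nonneg hx0.le _
    have hmin0 : 0 ≤ min (2*c*x) 2 := le_min (by positivity) (by norm_num)
    rw [Real.norm_eq_abs, Real.norm_eq_abs, _root_.abs_of_nonneg (by positivity),
      _root_.abs_of_nonneg (by positivity)]
    exact mul_le_mul_of_nonneg_right (min_le_right _ _) hr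

lemma normBound (α : ℝ) (z : ℂ) (hz : z.re ≤ 0) {c : ℝ} (hc : ‖z‖ ≤ c)
    {x : ℝ} (hx : 0 < x) :
    ‖(Complex.exp (z * x) - 1) * ((x ^ (-α - 1) : ℝ) : ℂ)‖ ≤ min (2*c*x) 2 * x ^ (-α-1) := by
  rw [norm_mul, Complex.norm_real, Real.norm_eq_abs,
    _root_.abs_of_nonneg (Real.rpow_nonneg hx.le _)]
  apply mul_le_mul_of_nonneg_right _ (Real.rpow_nonneg hx.le _)
  have habs : ‖z * x‖ = ‖z‖ * x := by
    rw [norm_mul, Complex.norm_real, Real.norm_eq_abs, _root_.abs_of_nonneg hx.le]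
  have hzx : ‖z‖ * x ≤ c * x := mul_le_mul_of_nonneg_right hc hx.le
  rcases le_total (2*c*x) 2 with h | h
  · rw [min_eq_left h]
    have h1 : ‖z * x‖ ≤ 1 := by rw [habs]; nlinarith
    calc ‖Complex.exp (z*x) - 1‖ ≤ 2 * ‖z*x‖ := Complex.norm_exp_sub_one_le h1
      _ = 2 * (‖z‖ * x) := by rw [habs]
      _ ≤ 2*c*x := by nlinarith
  · rw [min_eq_right h]
    have h2 : ‖Complex.exp (z*x)‖ ≤ 1 := by
      rw [Complex.norm_exp]
      have : (z * x).re ≤ 0 := by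
        simp only [Complex.mul_re, Complex.ofReal_re, Complex.ofReal_im, mul_zero, sub_zero]
        exact mul_nonpos_of_nonpos_of_nonneg hz hx.le
      exact Real.exp_le_one_iff.mpr this
    calc ‖Complex.exp (z*x) - 1‖ ≤ ‖Complex.exp (z*x)‖ + ‖(1:ℂ)‖ := norm_sub_le _ _
      _ ≤ 1 + 1 := by rw [norm_one]; linarith
      _ = 2 := by norm_num

lemma mainInt (α : ℝ) (hα : 0 < α) (hα1 : α < 1) (z : ℂ) (hz : z.re ≤ 0) :
    IntegrableOn (fun x : ℝ => (Complex.exp (z * x) - 1) * ((x ^ (-α-1) : ℝ) : ℂ))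
      (Set.Ioi 0) := by
  refine Integrable.mono (boundInt α ‖z‖ hα hα1 (norm_nonneg _)) ?_ ?_
  · exact (contOn α z).aestronglyMeasurable measurableSet_Ioi
  · filter_upwards [ae_restrict_mem measurableSet_Ioi] with x hx
    refine (normBound α z hz le_rfl hx).trans ?_
    rw [Real.norm_eq_abs]
    exact le_abs_self _

lemma expInt (α : ℝ) (hα : 0 < α) (hα1 : α < 1) {δ : ℝ} (hδ : 0 < δ) :
    IntegrableOn (fun x : ℝ => x ^ (-α) * Real.exp (-(δ * x))) (Set.Ioi 0) := by
  have hmeas : ContinuousOn (fun x : ℝ => x ^ (-α) * Real.exp (-(δ * x))) (Set.Ioi 0) := by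
    apply ContinuousOn.mul
    · intro x hx
      exact (Real.continuousAt_rpow_const x _ (Or.inl (ne_of_gt hx))).continuousWithinAt
    · exact ((continuous_const.mul continuous_id).neg.rexp).continuousOn
  rw [← Set.Ioc_union_Ioi_eq_Ioi (zero_le_one : (0:ℝ) ≤ 1)]
  apply IntegrableOn.union
  · have h1 : IntegrableOn (fun x : ℝ => x ^ (-α)) (Set.Ioc 0 1) := by
      rw [integrableOn_Ioc_iff_integrableOn_Ioo]
      exact (intervalIntegral.integrableOn_Ioo_rpow_iff one_pos).2 (by linarith)
    refine Integrable.mono h1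
      ((hmeas.mono Set.Ioc_subset_Ioi_self).aestronglyMeasurable measurableSet_Ioc) ?_
    filter_upwards [ae_restrict_mem measurableSet_Ioc] with x hx
    have hx0 : 0 < x := hx.1
    have he : Real.exp (-(δ * x)) ≤ 1 := Real.exp_le_one_iff.mpr (by nlinarith)
    rw [Real.norm_eq_abs, Real.norm_eq_abs, _root_.abs_of_nonneg (by positivity),
      _root_.abs_of_nonneg (Real.rpow_nonneg hx0.le _)]
    nlinarith [Real.rpow_nonneg hx0.le (-α), Real.exp_pos (-(δ*x))]
  · have h2 : IntegrableOn (fun x : ℝ => Real.exp (-δ * x)) (Set.Ioi 1) :=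
      exp_neg_integrableOn_Ioi 1 hδ
    refine Integrable.mono h2
      ((hmeas.mono (Set.Ioi_subset_Ioi zero_le_one)).aestronglyMeasurable measurableSet_Ioi) ?_
    filter_upwards [ae_restrict_mem measurableSet_Ioi] with x hx
    have hx1 : (1:ℝ) ≤ x := hx.le
    have hx0 : (0:ℝ) < x := lt_trans one_pos hx
    have hr : x ^ (-α) ≤ 1 := Real.rpow_le_one_of_one_le_of_nonpos hx1 (by linarith)
    rw [Real.norm_eq_abs, Real.norm_eq_abs, _root_.abs_of_nonneg (by positivity),
      _root_.abs_of_nonneg (Real.exp_pos _).le, neg_mul]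
    nlinarith [Real.exp_pos (-(δ*x)), Real.rpow_nonneg hx0.le (-α)]

lemma realFormula (α : ℝ) (hα : 0 < α) (hα1 : α < 1) {r : ℝ} (hr : 0 < r) :
    Jint α (-(r:ℂ)) = ((Real.Gamma (-α) * r ^ α : ℝ) : ℂ) := by
  have hα' : α ≠ 0 := hα.ne'
  set f : ℝ → ℂ := fun x => (Complex.exp (-(r:ℂ) * x) - 1) * ((-(x ^ (-α)) / α : ℝ) : ℂ) with hf
  set g1 : ℝ → ℂ := fun x =>
    (-(r:ℂ) * Complex.exp (-(r:ℂ) * x)) * ((-(x ^ (-α)) / α : ℝ) : ℂ) with hg1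
  set g2 : ℝ → ℂ := fun x => (Complex.exp (-(r:ℂ) * x) - 1) * ((x ^ (-α-1) : ℝ) : ℂ) with hg2
  -- derivative
  have hderiv : ∀ x ∈ Set.Ioi (0:ℝ), HasDerivAt f (g1 x + g2 x) x := by
    intro x hx
    have hx0 : (0:ℝ) < x := hx
    have hu : HasDerivAt (fun y : ℝ => Complex.exp (-(r:ℂ) * y) - 1)
        (-(r:ℂ) * Complex.exp (-(r:ℂ) * x)) x := by
      have h0 : HasDerivAt (fun y : ℝ => -(r:ℂ) * y) (-(r:ℂ)) x := by
        simpa using (Complex.ofRealCLM.hasDerivAt (x := x)).const_mul (-(r:ℂ))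
      simpa [mul_comm] using (h0.cexp.sub_const 1)
    have hvR : HasDerivAt (fun y : ℝ => -(y ^ (-α)) / α) (x ^ (-α-1)) x := by
      have h1 := (Real.hasDerivAt_rpow_const (x := x) (p := -α) (Or.inl hx0.ne')).neg.div_const α
      refine h1.congr_deriv ?_
      rw [div_eq_iff hα']; ring
    have hv : HasDerivAt (fun y : ℝ => ((-(y ^ (-α)) / α : ℝ) : ℂ)) ((x ^ (-α-1) : ℝ) : ℂ) x :=
      hvR.ofReal_comp
    exact hu.mul hv
  -- continuity at 0
  have hf0 : f 0 = 0 := by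
    simp [hf, Real.zero_rpow (neg_ne_zero.mpr hα')]
  have hcont : ContinuousWithinAt f (Set.Ici 0) 0 := by
    rw [← continuousWithinAt_Ioi_iff_Ici]
    rw [ContinuousWithinAt, hf0]
    apply squeeze_zero_norm' (a := fun x => (r/α) * x ^ (1-α))
    · filter_upwards [self_mem_nhdsWithin] with x (hx : (0:ℝ) < x)
      have hexp : Complex.exp (-(r:ℂ) * x) = ((Real.exp (-(r*x)) : ℝ) : ℂ) := by
        rw [Complex.ofReal_exp]; norm_cast; ring_nf
      have h1 : |Real.exp (-(r*x)) - 1| ≤ r * x := by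
        have h2 : Real.exp (-(r*x)) ≤ 1 := Real.exp_le_one_iff.mpr (by nlinarith)
        have h3 : 1 - r*x ≤ Real.exp (-(r*x)) := by
          have := Real.add_one_le_exp (-(r*x)); linarith
        rw [abs_sub_comm, _root_.abs_of_nonneg (by linarith)]; linarith
      rw [hf]
      simp only [hexp]
      rw [← Complex.ofReal_one, ← Complex.ofReal_sub, ← Complex.ofReal_mul, Complex.norm_real,
        Real.norm_eq_abs, abs_mul]
      have h4 : |(-(x ^ (-α)) / α : ℝ)| = x ^ (-α) / α := by
        rw [abs_div, abs_neg, _root_.abs_of_nonneg (Real.rpow_nonneg hx.le _),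
          _root_.abs_of_nonneg hα.le]
      rw [h4]
      calc |Real.exp (-(r*x)) - 1| * (x ^ (-α) / α) ≤ (r * x) * (x ^ (-α) / α) := by
            apply mul_le_mul_of_nonneg_right h1 (by positivity)
        _ = (r/α) * (x * x ^ (-α)) := by ring
        _ = (r/α) * x ^ (1-α) := by
            rw [show x * x ^ (-α) = x ^ (1:ℝ) * x ^ (-α) by rw [Real.rpow_one],
              ← Real.rpow_add hx, show (1:ℝ) + -α = 1 - α by ring]
    · have hc : ContinuousAt (fun x : ℝ => (r/α) * x ^ (1-α)) 0 := by
        exact (Real.continuousAt_rpow_const 0 (1-α) (Or.inr (by linarith))).const_mul _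
      have h5 : r / α * (0:ℝ) ^ (1-α) = 0 := by
        rw [Real.zero_rpow (show (1:ℝ)-α ≠ 0 by intro h; linarith [h])]; ring
      have h6 := hc.tendsto
      rw [h5] at h6
      exact h6.mono_left nhdsWithin_le_nhds
  -- limit at infinity
  have htop : Tendsto f atTop (𝓝 0) := by
    apply squeeze_zero_norm' (a := fun x => x ^ (-α) / α)
    · filter_upwards [Ioi_mem_atTop (0:ℝ)] with x (hx : (0:ℝ) < x)
      have hexp : Complex.exp (-(r:ℂ) * x) = ((Real.exp (-(r*x)) : ℝ) : ℂ) := by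
        rw [Complex.ofReal_exp]; norm_cast; ring_nf
      rw [hf]
      simp only [hexp]
      rw [← Complex.ofReal_one, ← Complex.ofReal_sub, ← Complex.ofReal_mul, Complex.norm_real,
        Real.norm_eq_abs, abs_mul]
      have h1 : |Real.exp (-(r*x)) - 1| ≤ 1 := by
        have h2 : Real.exp (-(r*x)) ≤ 1 := Real.exp_le_one_iff.mpr (by nlinarith)
        have h3 : 0 < Real.exp (-(r*x)) := Real.exp_pos _
        rw [abs_sub_comm, _root_.abs_of_nonneg (by linarith)]; linarith
      have h4 : |(-(x ^ (-α)) / α : ℝ)| = x ^ (-α) / α := by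
        rw [abs_div, abs_neg, _root_.abs_of_nonneg (Real.rpow_nonneg hx.le _),
          _root_.abs_of_nonneg hα.le]
      rw [h4]
      nlinarith [Real.rpow_nonneg hx.le (-α), abs_nonneg (Real.exp (-(r*x)) - 1),
        mul_le_mul_of_nonneg_right h1 (by positivity : (0:ℝ) ≤ x ^ (-α) / α)]
    · simpa using (tendsto_rpow_neg_atTop hα).div_const α
  -- integrability of the two pieces
  have hzre : (-(r:ℂ)).re ≤ 0 := by simp [hr.le]
  have hint2 : IntegrableOn g2 (Set.Ioi 0) := mainInt α hα hα1 _ hzre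
  have hint1 : IntegrableOn g1 (Set.Ioi 0) := by
    have h0 : IntegrableOn (fun x : ℝ => ((r/α * (x ^ (-α) * Real.exp (-(r * x))) : ℝ) : ℂ))
        (Set.Ioi 0) := (((expInt α hα hα1 hr).const_mul (r/α)).ofReal (𝕜 := ℂ))
    apply h0.congr_fun _ measurableSet_Ioi
    intro x hx
    have hexp : Complex.exp (-(r:ℂ) * x) = ((Real.exp (-(r*x)) : ℝ) : ℂ) := by
      rw [Complex.ofReal_exp]; norm_cast; ring_nf
    rw [hg1]
    simp only [hexp]
    push_cast
    field_simp
  have hint : IntegrableOn (fun x => g1 x + g2 x) (Set.Ioi 0) := hint1.add hint2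
  -- FTC
  have hFTC : ∫ x in Set.Ioi (0:ℝ), (g1 x + g2 x) = 0 - f 0 :=
    integral_Ioi_of_hasDerivAt_of_tendsto hcont hderiv hint htop
  rw [hf0, sub_zero] at hFTC
  rw [integral_add hint1 hint2] at hFTC
  -- value of ∫ g1
  have hg1val : ∫ x in Set.Ioi (0:ℝ), g1 x
      = ((r/α : ℝ) : ℂ) * ((1/(r:ℂ)) ^ ((1-α : ℝ):ℂ) * Complex.Gamma ((1-α : ℝ):ℂ)) := by
    have key := integral_cpow_mul_exp_neg_mul_Ioi
      (a := ((1-α : ℝ) : ℂ)) (by rw [Complex.ofReal_re]; linarith) hr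
    have hcong : ∀ x ∈ Set.Ioi (0:ℝ),
        g1 x = ((r/α : ℝ) : ℂ) * ((x:ℂ) ^ (((1-α : ℝ):ℂ) - 1) * Complex.exp (-((r:ℂ) * x))) := by
      intro x hx
      have hx0 : (0:ℝ) < x := hx
      have hcp : (x:ℂ) ^ (((1-α : ℝ):ℂ) - 1) = ((x ^ (-α) : ℝ) : ℂ) := by
        rw [Complex.ofReal_cpow hx0.le]
        congr 1
        push_cast
        ring
      show -(r:ℂ) * Complex.exp (-(r:ℂ) * x) * ((-(x ^ (-α)) / α : ℝ) : ℂ)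
          = ((r/α : ℝ) : ℂ) * ((x:ℂ) ^ (((1-α : ℝ):ℂ) - 1) * Complex.exp (-((r:ℂ) * x)))
      rw [hcp, show -((r:ℂ) * x) = -(r:ℂ) * x by ring]
      push_cast
      field_simp
    rw [setIntegral_congr_fun measurableSet_Ioi hcong, MeasureTheory.integral_const_mul, key]
  rw [hg1val] at hFTC
  -- conclude
  have hJ : Jint α (-(r:ℂ))
      = -(((r/α : ℝ) : ℂ) * ((1/(r:ℂ)) ^ ((1-α : ℝ):ℂ) * Complex.Gamma ((1-α : ℝ):ℂ))) := by
    have : ∫ x in Set.Ioi (0:ℝ), g2 x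
        = -(((r/α : ℝ) : ℂ) * ((1/(r:ℂ)) ^ ((1-α : ℝ):ℂ) * Complex.Gamma ((1-α : ℝ):ℂ))) := by
      linear_combination hFTC
    rw [Jint]
    simpa [hg2] using this
  rw [hJ]
  -- now express in reals
  have h6 : ((1/(r:ℂ))) ^ ((1-α : ℝ):ℂ) = (((1/r) ^ (1-α) : ℝ) : ℂ) := by
    rw [Complex.ofReal_cpow (by positivity)]
    push_cast
    ring_nf
  rw [h6, Complex.Gamma_ofReal, ← Complex.ofReal_mul, ← Complex.ofReal_mul, ← Complex.ofReal_neg]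
  congr 1
  -- real identity
  have hG : Real.Gamma (1-α) = -α * Real.Gamma (-α) := by
    have h7 := Real.Gamma_add_one (s := -α) (neg_ne_zero.mpr hα')
    rw [show -α + 1 = 1 - α by ring] at h7
    rw [h7]
  have hpow : (1/r) ^ (1-α) = r ^ (α-1) := by
    rw [one_div, ← Real.rpow_neg_one r, ← Real.rpow_mul hr.le,
      show (-1 : ℝ) * (1-α) = α - 1 by ring]
  have hr1 : r * r ^ (α-1) = r ^ α := by
    rw [show r * r ^ (α-1) = r ^ (1:ℝ) * r ^ (α-1) by rw [Real.rpow_one],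
      ← Real.rpow_add hr, show (1:ℝ) + (α-1) = α by ring]
  rw [hpow, hG]
  calc -(r/α * (r ^ (α-1) * (-α * Real.Gamma (-α))))
      = (r * r ^ (α-1)) * Real.Gamma (-α) := by field_simp
    _ = r ^ α * Real.Gamma (-α) := by rw [hr1]
    _ = Real.Gamma (-α) * r ^ α := by ring

lemma JDiff (α : ℝ) (hα : 0 < α) (hα1 : α < 1) {z : ℂ} (hz : z.re < 0) :
    DifferentiableAt ℂ (Jint α) z := by
  set δ : ℝ := -z.re/2 with hδdef
  have hδ : 0 < δ := by rw [hδdef]; linarith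
  have H := hasDerivAt_integral_of_dominated_loc_of_deriv_le
    (μ := volume.restrict (Set.Ioi 0)) (𝕜 := ℂ)
    (F := fun w (x : ℝ) => (Complex.exp (w * x) - 1) * ((x ^ (-α-1) : ℝ) : ℂ))
    (F' := fun w (x : ℝ) => ((x:ℂ) * Complex.exp (w * x)) * ((x ^ (-α-1) : ℝ) : ℂ))
    (x₀ := z) (bound := fun x => x ^ (-α) * Real.exp (-(δ * x))) (s := Metric.ball z δ) (Metric.ball_mem_nhds z hδ)
    (Eventually.of_forall fun w => (contOn α w).aestronglyMeasurable measurableSet_Ioi)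
    (mainInt α hα hα1 z hz.le)
    ((contOn' α z).aestronglyMeasurable measurableSet_Ioi)
    ?_ (expInt α hα hα1 hδ) ?_
  · exact H.2.differentiableAt
  · filter_upwards [ae_restrict_mem measurableSet_Ioi] with x hx
    intro w hw
    have hx0 : (0:ℝ) < x := hx
    have hwre : w.re ≤ -δ := by
      have h1 : |w.re - z.re| ≤ ‖w - z‖ := by
        have := Complex.abs_re_le_norm (w - z)
        simpa using this
      have h2 : ‖w - z‖ < δ := by
        rw [Metric.mem_ball, Complex.dist_eq] at hw
        exact hw
      have h3 : w.re - z.re ≤ |w.re - z.re| := le_abs_self _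
      have : z.re = -(2*δ) := by rw [hδdef]; ring
      linarith
    have hnorm : ‖((x:ℂ) * Complex.exp (w * (x:ℂ))) * ((x ^ (-α-1) : ℝ) : ℂ)‖
        = x * Real.exp (w.re * x) * x ^ (-α-1) := by
      rw [norm_mul, norm_mul, Complex.norm_real, Real.norm_eq_abs, Complex.norm_real,
        Real.norm_eq_abs, Complex.norm_exp,
        _root_.abs_of_nonneg (Real.rpow_nonneg hx0.le _), _root_.abs_of_nonneg hx0.le]
      congr 2
      simp [Complex.mul_re]
    rw [hnorm]
    have h5 : Real.exp (w.re * x) ≤ Real.exp (-(δ * x)) := by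
      apply Real.exp_le_exp.mpr
      nlinarith
    calc x * Real.exp (w.re * x) * x ^ (-α-1)
        = (x * x ^ (-α-1)) * Real.exp (w.re * x) := by ring
      _ = x ^ (-α) * Real.exp (w.re * x) := by rw [rpow_aux hx0]
      _ ≤ x ^ (-α) * Real.exp (-(δ * x)) :=
          mul_le_mul_of_nonneg_left h5 (Real.rpow_nonneg hx0.le _)
  · filter_upwards [ae_restrict_mem measurableSet_Ioi] with x hx
    intro w hw
    have h := (((hasDerivAt_id w).mul_const ((x:ℝ):ℂ)).cexp.sub_const 1).mul_const
      ((x ^ (-α-1) : ℝ) : ℂ)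
    simp only [id_eq] at h
    exact h.congr_deriv (by ring)

lemma Jformula (α : ℝ) (hα : 0 < α) (hα1 : α < 1) {z : ℂ} (hz : z.re < 0) :
    Jint α z = ((Real.Gamma (-α) : ℝ) : ℂ) * (-z) ^ ((α : ℝ) : ℂ) := by
  have hU : IsOpen {w : ℂ | w.re < 0} := isOpen_lt Complex.continuous_re continuous_const
  have hAf : AnalyticOnNhd ℂ (Jint α) {w : ℂ | w.re < 0} :=
    DifferentiableOn.analyticOnNhd
      (fun w hw => (JDiff α hα hα1 hw).differentiableWithinAt) hU
  have hAg : AnalyticOnNhd ℂ (fun w => ((Real.Gamma (-α) : ℝ) : ℂ) * (-w) ^ ((α : ℝ) : ℂ))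
      {w : ℂ | w.re < 0} := by
    apply DifferentiableOn.analyticOnNhd _ hU
    intro w hw
    apply DifferentiableAt.differentiableWithinAt
    apply DifferentiableAt.const_mul
    have hmem : -w ∈ Complex.slitPlane := Or.inl (by simpa using (by exact hw : w.re < 0))
    exact ((hasDerivAt_id w).neg.cpow_const hmem).differentiableAt
  have hpre : IsPreconnected {w : ℂ | w.re < 0} := (convex_halfSpace_re_lt 0).isPreconnected
  have hmem : (-1 : ℂ) ∈ {w : ℂ | w.re < 0} := by norm_num [Set.mem_setOf_eq]
  have freq : ∃ᶠ w in 𝓝[≠] (-1:ℂ),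
      Jint α w = ((Real.Gamma (-α) : ℝ) : ℂ) * (-w) ^ ((α : ℝ) : ℂ) := by
    have htend : Tendsto (fun n : ℕ => ((-(1 + ((n:ℝ)+1)⁻¹) : ℝ) : ℂ)) atTop (𝓝[≠] (-1:ℂ)) := by
      rw [tendsto_nhdsWithin_iff]
      constructor
      · have hre : Tendsto (fun n : ℕ => (-(1 + ((n:ℝ)+1)⁻¹) : ℝ)) atTop (𝓝 (-1)) := by
          have h0 : Tendsto (fun n : ℕ => (((n:ℝ)+1)⁻¹ : ℝ)) atTop (𝓝 0) := by
            simpa using tendsto_one_div_add_atTop_nhds_zero_nat (𝕜 := ℝ)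
          have h1 := (h0.const_add (1:ℝ)).neg
          simpa using h1
        have h3 := (Complex.continuous_ofReal.tendsto (-1)).comp hre
        simpa [Function.comp_def] using h3
      · apply Eventually.of_forall
        intro n
        simp only [Set.mem_compl_iff, Set.mem_singleton_iff]
        intro hcon
        have h4 : (-(1 + ((n:ℝ)+1)⁻¹) : ℝ) = -1 := by exact_mod_cast hcon
        have hpos : (0:ℝ) < ((n:ℝ)+1)⁻¹ := by positivity
        linarith
    apply htend.frequently
    apply Eventually.frequently
    apply Eventually.of_forall
    intro n
    set r : ℝ := 1 + ((n:ℝ)+1)⁻¹ with hrdef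
    have hr : 0 < r := by positivity
    have h1 : ((-r : ℝ) : ℂ) = -(r:ℂ) := by push_cast; ring
    rw [h1, realFormula α hα hα1 hr, neg_neg, Complex.ofReal_mul,
      Complex.ofReal_cpow hr.le]
  exact hAf.eqOn_of_preconnected_of_frequently_eq hAg hpre hmem freq hz

lemma finalAlg (α t : ℝ) (hα : 0 < α) (hα1 : α < 1) (ht : t ≠ 0) :
    ((Real.Gamma (-α) : ℝ) : ℂ) * (-(Complex.I * t)) ^ ((α : ℝ) : ℂ) =
      -((-Real.Gamma (-α) * Real.cos (Real.pi * α / 2) : ℝ) : ℂ) * ((|t| ^ α : ℝ) : ℂ) *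
        (1 - Complex.I * Real.sign t * Real.tan (Real.pi * α / 2)) := by
  have hπ := Real.pi_pos
  have hcos : 0 < Real.cos (Real.pi * α / 2) :=
    Real.cos_pos_of_mem_Ioo ⟨by nlinarith, by nlinarith⟩
  have hcosC : ((Real.cos (Real.pi * α / 2) : ℝ) : ℂ) ≠ 0 := Complex.ofReal_ne_zero.mpr hcos.ne'
  rcases ht.lt_or_gt with htneg | htpos
  · -- t < 0
    have habs : |t| = -t := abs_of_neg htneg
    have hsign : Real.sign t = -1 := Real.sign_of_neg htneg
    have hw : -(Complex.I * (t:ℂ)) = ((-t : ℝ):ℂ) * Complex.I := by push_cast; ring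
    have hne : ((-t : ℝ):ℂ) * Complex.I ≠ 0 := by
      apply mul_ne_zero
      · exact Complex.ofReal_ne_zero.mpr (by linarith)
      · exact Complex.I_ne_zero
    have hlog : Complex.log (((-t : ℝ):ℂ) * Complex.I)
        = ((Real.log (-t) : ℝ) : ℂ) + ((Real.pi/2 : ℝ) : ℂ) * Complex.I := by
      rw [Complex.log_ofReal_mul (by linarith) Complex.I_ne_zero, Complex.log_I]
      push_cast
      ring
    have hcpow : (-(Complex.I * (t:ℂ))) ^ ((α:ℝ):ℂ)
        = (((-t) ^ α : ℝ) : ℂ) * Complex.exp (((Real.pi * α / 2 : ℝ) : ℂ) * Complex.I) := by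
      rw [hw, Complex.cpow_def_of_ne_zero hne, hlog, add_mul, Complex.exp_add]
      congr 1
      · rw [show ((Real.log (-t) : ℝ):ℂ) * ((α:ℝ):ℂ) = ((Real.log (-t) * α : ℝ) : ℂ) by
          push_cast; ring, ← Complex.ofReal_exp]
        congr 1
        rw [Real.rpow_def_of_pos (by linarith)]
      · congr 1
        push_cast
        ring
    rw [hcpow, hsign, habs, Complex.exp_mul_I]
    have htn : ((Real.tan (Real.pi * α / 2) : ℝ) : ℂ) * ((Real.cos (Real.pi * α / 2) : ℝ) : ℂ)
        = ((Real.sin (Real.pi * α / 2) : ℝ) : ℂ) := by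
      rw [← Complex.ofReal_mul, Real.tan_eq_sin_div_cos]
      congr 1
      field_simp
    push_cast at htn ⊢
    linear_combination (-(((Real.Gamma (-α) : ℝ):ℂ) * (((-t) ^ α : ℝ):ℂ) * Complex.I)) * htn
  · -- t > 0
    have habs : |t| = t := abs_of_pos htpos
    have hsign : Real.sign t = 1 := Real.sign_of_pos htpos
    have hw : -(Complex.I * (t:ℂ)) = ((t : ℝ):ℂ) * (-Complex.I) := by push_cast; ring
    have hne : ((t : ℝ):ℂ) * (-Complex.I) ≠ 0 := by
      apply mul_ne_zero
      · exact Complex.ofReal_ne_zero.mpr (by linarith)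
      · simpa using Complex.I_ne_zero
    have hlog : Complex.log (((t : ℝ):ℂ) * (-Complex.I))
        = ((Real.log t : ℝ) : ℂ) + ((-(Real.pi/2) : ℝ) : ℂ) * Complex.I := by
      rw [Complex.log_ofReal_mul htpos (by simpa using Complex.I_ne_zero), Complex.log_neg_I]
      push_cast
      ring
    have hcpow : (-(Complex.I * (t:ℂ))) ^ ((α:ℝ):ℂ)
        = ((t ^ α : ℝ) : ℂ) * Complex.exp (((-(Real.pi * α / 2) : ℝ) : ℂ) * Complex.I) := by
      rw [hw, Complex.cpow_def_of_ne_zero hne, hlog, add_mul, Complex.exp_add]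
      congr 1
      · rw [show ((Real.log t : ℝ):ℂ) * ((α:ℝ):ℂ) = ((Real.log t * α : ℝ) : ℂ) by
          push_cast; ring, ← Complex.ofReal_exp]
        congr 1
        rw [Real.rpow_def_of_pos htpos]
      · congr 1
        push_cast
        ring
    rw [hcpow, hsign, habs,
      show ((-(Real.pi * α / 2) : ℝ) : ℂ) = -((Real.pi * α / 2 : ℝ) : ℂ) by push_cast; ring,
      Complex.exp_mul_I, Complex.cos_neg, Complex.sin_neg]
    have htn : ((Real.tan (Real.pi * α / 2) : ℝ) : ℂ) * ((Real.cos (Real.pi * α / 2) : ℝ) : ℂ)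
        = ((Real.sin (Real.pi * α / 2) : ℝ) : ℂ) := by
      rw [← Complex.ofReal_mul, Real.tan_eq_sin_div_cos]
      congr 1
      field_simp
    push_cast at htn ⊢
    linear_combination (((Real.Gamma (-α) : ℝ):ℂ) * ((t ^ α : ℝ):ℂ) * Complex.I) * htn

theorem stmt8 (α : ℝ) (hα : 0 < α) (hα1 : α < 1) (t : ℝ) :
    IntegrableOn
      (fun x : ℝ => (Complex.exp (Complex.I * t * x) - 1) * ((x ^ (-α - 1) : ℝ) : ℂ))
      (Set.Ioi (0 : ℝ)) ∧
    ∫ x in Set.Ioi (0 : ℝ),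
        (Complex.exp (Complex.I * t * x) - 1) * ((x ^ (-α - 1) : ℝ) : ℂ) =
      -((-Real.Gamma (-α) * Real.cos (Real.pi * α / 2) : ℝ) : ℂ) * ((|t| ^ α : ℝ) : ℂ) *
        (1 - Complex.I * Real.sign t * Real.tan (Real.pi * α / 2)) := by
  rcases eq_or_ne t 0 with rfl | ht
  · have hzero : (fun x : ℝ => (Complex.exp (Complex.I * (0:ℝ) * x) - 1) * ((x ^ (-α - 1) : ℝ) : ℂ))
        = fun _ => (0:ℂ) := by
      funext x
      simp
    constructor
    · rw [hzero]
      exact integrableOn_zero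
    · rw [hzero, integral_zero]
      rw [abs_zero, Real.zero_rpow hα.ne']
      simp
  · have hre : (Complex.I * (t:ℂ)).re ≤ 0 := by simp [Complex.mul_re]
    have hmain : IntegrableOn
        (fun x : ℝ => (Complex.exp (Complex.I * t * x) - 1) * ((x ^ (-α - 1) : ℝ) : ℂ))
        (Set.Ioi (0 : ℝ)) := by
      have := mainInt α hα hα1 (Complex.I * (t:ℂ)) hre
      simpa using this
    refine ⟨hmain, ?_⟩
    -- limit from the left half plane
    have hlhs : Tendsto (fun ε : ℝ => Jint α (Complex.I * t - ε)) (𝓝[>] 0)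
        (𝓝 (∫ x in Set.Ioi (0:ℝ),
          (Complex.exp (Complex.I * t * x) - 1) * ((x ^ (-α - 1) : ℝ) : ℂ))) := by
      apply MeasureTheory.tendsto_integral_filter_of_dominated_convergence
        (bound := fun x : ℝ => min (2*(|t|+1)*x) 2 * x ^ (-α - 1))
      · exact Eventually.of_forall fun ε =>
          (contOn α _).aestronglyMeasurable measurableSet_Ioi
      · filter_upwards [Ioo_mem_nhdsGT (one_pos : (0:ℝ) < 1)] with ε hε
        filter_upwards [ae_restrict_mem measurableSet_Ioi] with x hx
        apply normBound α _ _ _ hx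
        · simp [Complex.sub_re, Complex.mul_re]
          linarith [hε.1]
        · calc ‖Complex.I * t - ε‖
              ≤ ‖Complex.I * t‖ + ‖(ε:ℂ)‖ := by
                simpa [sub_eq_add_neg] using norm_add_le (Complex.I * t) (-(ε:ℂ))
            _ = |t| + |ε| := by simp [Complex.norm_real]
            _ ≤ |t| + 1 := by
                have := hε.2
                have := hε.1
                rw [_root_.abs_of_pos hε.1]
                linarith
      · exact boundInt α (|t|+1) hα hα1 (by positivity)
      · filter_upwards [ae_restrict_mem measurableSet_Ioi] with x hx
        have hc : Continuous (fun ε : ℝ =>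
            (Complex.exp ((Complex.I * t - ε) * x) - 1) * ((x ^ (-α - 1) : ℝ) : ℂ)) := by
          apply Continuous.mul _ continuous_const
          apply Continuous.sub _ continuous_const
          exact (((continuous_const.sub Complex.continuous_ofReal).mul continuous_const)).cexp
        have h0 := hc.tendsto 0
        simp only [Complex.ofReal_zero, sub_zero] at h0
        exact h0.mono_left nhdsWithin_le_nhds
    have hrhs : Tendsto (fun ε : ℝ => Jint α (Complex.I * t - ε)) (𝓝[>] 0)
        (𝓝 (((Real.Gamma (-α) : ℝ) : ℂ) * (-(Complex.I * t)) ^ ((α : ℝ) : ℂ))) := by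
      have heq : ∀ᶠ ε : ℝ in 𝓝[>] 0,
          ((Real.Gamma (-α) : ℝ) : ℂ) * (-(Complex.I * t - ε)) ^ ((α : ℝ) : ℂ)
            = Jint α (Complex.I * t - ε) := by
        filter_upwards [self_mem_nhdsWithin] with ε (hε : (0:ℝ) < ε)
        refine (Jformula α hα hα1 ?_).symm
        simp [Complex.sub_re, Complex.mul_re]
        linarith
      apply Tendsto.congr' heq
      have hbase : Tendsto (fun ε : ℝ => -(Complex.I * t - ε)) (𝓝[>] 0)
          (𝓝 (-(Complex.I * t))) := by
        have hc : Continuous (fun ε : ℝ => -(Complex.I * (t:ℂ) - ε)) :=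
          (continuous_const.sub Complex.continuous_ofReal).neg
        have h0 := hc.tendsto 0
        simp only [Complex.ofReal_zero, sub_zero] at h0
        exact h0.mono_left nhdsWithin_le_nhds
      have hcpow : ContinuousAt (fun w : ℂ => w ^ ((α : ℝ) : ℂ)) (-(Complex.I * t)) := by
        apply continuousAt_cpow_const
        right
        simp [Complex.mul_im, ht]
      exact (hcpow.tendsto.comp hbase).const_mul _
    have hkey := tendsto_nhds_unique hlhs hrhs
    rw [hkey]
    exact finalAlg α t hα hα1 ht
end

section
/- For every real t, the function x ↦ (e^{itx} − 1 − i t sin x)·x^{−2} is Bochner integrable on (0, ∞) and ∫₀^∞ (e^{itx} − 1 − i t sin x) x^{−2} dx = −(π/2)|t| − i t log|t|. -/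
open MeasureTheory Complex Filter
open Set


lemma cexp_integrableOn {c : ℂ} (hc : c.re < 0) :
    IntegrableOn (fun x : ℝ => Complex.exp (c * x)) (Ioi 0) := by
  have h : IntegrableOn (fun x : ℝ => Real.exp (-(-c.re) * x)) (Ioi 0) :=
    exp_neg_integrableOn_Ioi 0 (by linarith)
  refine h.mono' ((Continuous.aestronglyMeasurable (by continuity)).restrict) ?_
  filter_upwards with x
  simp [Complex.norm_exp, mul_comm]

lemma cexp_integral {c : ℂ} (hc : c.re < 0) :
    ∫ x in Ioi (0:ℝ), Complex.exp (c * x) = -c⁻¹ := by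
  have hc0 : c ≠ 0 := fun h => by simp [h] at hc
  have hderiv : ∀ x ∈ Ici (0:ℝ), HasDerivAt (fun x : ℝ => c⁻¹ * Complex.exp (c * x))
      (Complex.exp (c * x)) x := by
    intro x _
    have h1 : HasDerivAt (fun x : ℝ => c * (x:ℂ)) c x := by
      simpa using (Complex.ofRealCLM.hasDerivAt (x := x)).const_mul c
    have h2 := ((Complex.hasDerivAt_exp (c * x)).comp x h1).const_mul c⁻¹
    have : c⁻¹ * (Complex.exp (c * x) * c) = Complex.exp (c * x) := by
      field_simp
    simpa [Function.comp, this, mul_comm c⁻¹] using h2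
  have htend : Tendsto (fun x : ℝ => c⁻¹ * Complex.exp (c * x)) atTop (nhds 0) := by
    rw [tendsto_zero_iff_norm_tendsto_zero]
    have : Tendsto (fun x : ℝ => Real.exp (c.re * x)) atTop (nhds 0) := by
      simpa using Real.tendsto_exp_comp_nhds_zero.mpr
        ((tendsto_const_mul_atBot_of_neg hc).mpr tendsto_id)
    have h0 : Tendsto (fun x : ℝ => ‖c⁻¹‖ * Real.exp (c.re * x)) atTop (nhds 0) := by
      simpa using this.const_mul ‖c⁻¹‖
    refine h0.congr (fun x => ?_)
    simp [norm_mul, Complex.norm_exp, mul_comm]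
  have := integral_Ioi_of_hasDerivAt_of_tendsto' hderiv (cexp_integrableOn hc) htend
  simpa using this


lemma abs_le_of_uIcc {u y : ℝ} (hu : u ∈ uIcc 0 y) : |u| ≤ |y| := by
  rcases mem_uIcc.mp hu with h | h <;> rw [abs_le] <;> constructor <;>
    nlinarith [le_abs_self y, neg_abs_le y, h.1, h.2]

lemma exp_I_sub_one_le (y : ℝ) : ‖Complex.exp (Complex.I * y) - 1‖ ≤ |y| := by
  have := Convex.norm_image_sub_le_of_norm_hasDerivWithin_le
    (f := fun u : ℝ => Complex.exp (Complex.I * u) - 1)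
    (f' := fun u : ℝ => Complex.I * Complex.exp (Complex.I * u))
    (s := uIcc 0 y) (C := 1)
    (fun u _ => by
      have h1 : HasDerivAt (fun u : ℝ => Complex.I * (u:ℂ)) Complex.I u := by
        simpa using (Complex.ofRealCLM.hasDerivAt (x := u)).const_mul Complex.I
      have := ((Complex.hasDerivAt_exp (Complex.I * u)).comp u h1).sub_const 1
      exact (this.congr_deriv (by ring)).hasDerivWithinAt)
    (fun u _ => by simp [Complex.norm_exp])
    (convex_uIcc 0 y) (left_mem_uIcc) (right_mem_uIcc)
  simpa using this

lemma exp_I_taylor_le (y : ℝ) : ‖Complex.exp (Complex.I * y) - 1 - Complex.I * y‖ ≤ y ^ 2 := by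
  have := Convex.norm_image_sub_le_of_norm_hasDerivWithin_le
    (f := fun u : ℝ => Complex.exp (Complex.I * u) - 1 - Complex.I * u)
    (f' := fun u : ℝ => Complex.I * (Complex.exp (Complex.I * u) - 1))
    (s := uIcc 0 y) (C := |y|)
    (fun u _ => by
      have h1 : HasDerivAt (fun u : ℝ => Complex.I * (u:ℂ)) Complex.I u := by
        simpa using (Complex.ofRealCLM.hasDerivAt (x := u)).const_mul Complex.I
      have := (((Complex.hasDerivAt_exp (Complex.I * u)).comp u h1).sub_const 1).sub h1
      exact (this.congr_deriv (by ring)).hasDerivWithinAt)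
    (fun u hu => by
      calc ‖Complex.I * (Complex.exp (Complex.I * u) - 1)‖
          = ‖Complex.exp (Complex.I * u) - 1‖ := by simp
        _ ≤ |u| := exp_I_sub_one_le u
        _ ≤ |y| := abs_le_of_uIcc hu)
    (convex_uIcc 0 y) (left_mem_uIcc) (right_mem_uIcc)
  calc ‖Complex.exp (Complex.I * y) - 1 - Complex.I * y‖
      ≤ |y| * ‖y - 0‖ := by simpa using this
    _ = y ^ 2 := by rw [sub_zero, Real.norm_eq_abs, ← abs_mul, abs_mul_self, sq]

lemma sub_sin_le (x : ℝ) : |x - Real.sin x| ≤ x ^ 2 := by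
  have key : ∀ u : ℝ, |1 - Real.cos u| ≤ |u| := by
    intro u
    have h1 := Real.abs_sin_le_abs (x := u / 2)
    have hcos : Real.cos u = 1 - 2 * Real.sin (u / 2) ^ 2 := by
      have hc := Real.cos_two_mul (u/2)
      have hs := Real.sin_sq_add_cos_sq (u/2)
      rw [show 2 * (u/2) = u by ring] at hc; nlinarith
    have h3 : |Real.sin (u/2)| ≤ 1 := Real.abs_sin_le_one _
    have habs : |1 - Real.cos u| = 2 * Real.sin (u/2)^2 := by
      rw [hcos, _root_.abs_of_nonneg] <;> nlinarith [sq_nonneg (Real.sin (u/2))]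
    rw [habs]
    have h4 : |u/2| ≤ |u| / 2 + 0 := by rw [abs_div]; simp
    nlinarith [_root_.sq_abs (Real.sin (u/2)), abs_nonneg (Real.sin (u/2)), abs_nonneg u]
  have := Convex.norm_image_sub_le_of_norm_hasDerivWithin_le
    (f := fun u : ℝ => u - Real.sin u)
    (f' := fun u : ℝ => 1 - Real.cos u)
    (s := uIcc 0 x) (C := |x|)
    (fun u _ => ((hasDerivAt_id u).sub (Real.hasDerivAt_sin u)).hasDerivWithinAt)
    (fun u hu => (key u).trans (abs_le_of_uIcc hu))
    (convex_uIcc 0 x) (left_mem_uIcc) (right_mem_uIcc)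
  calc |x - Real.sin x| = ‖(x - Real.sin x) - (0 - Real.sin 0)‖ := by simp
    _ ≤ |x| * ‖x - 0‖ := this
    _ = x ^ 2 := by rw [sub_zero, Real.norm_eq_abs, ← abs_mul, abs_mul_self, sq]

lemma g_bound_sq (t x : ℝ) :
    ‖Complex.exp (Complex.I * t * x) - 1 - Complex.I * t * Real.sin x‖ ≤ (t^2 + |t|) * x^2 := by
  have key : Complex.exp (Complex.I * t * x) - 1 - Complex.I * t * Real.sin x
      = (Complex.exp (Complex.I * ((t*x : ℝ):ℂ)) - 1 - Complex.I * ((t*x : ℝ):ℂ))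
        + Complex.I * t * ((x - Real.sin x : ℝ) : ℂ) := by
    push_cast; ring
  rw [key]
  calc _ ≤ ‖Complex.exp (Complex.I * ((t*x : ℝ):ℂ)) - 1 - Complex.I * ((t*x : ℝ):ℂ)‖
        + ‖Complex.I * t * ((x - Real.sin x : ℝ) : ℂ)‖ := norm_add_le _ _
    _ ≤ (t*x)^2 + |t| * |x - Real.sin x| := by
        gcongr
        · exact exp_I_taylor_le (t*x)
        · simp only [norm_mul, Complex.norm_I, Complex.norm_real, Real.norm_eq_abs, one_mul]
          exact le_refl _
    _ ≤ t^2*x^2 + |t| * x^2 := by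
        have := sub_sin_le x
        have h0 : (t*x)^2 = t^2*x^2 := by ring
        nlinarith [abs_nonneg t]
    _ = (t^2 + |t|) * x^2 := by ring

lemma g_bound_const (t x : ℝ) :
    ‖Complex.exp (Complex.I * t * x) - 1 - Complex.I * t * Real.sin x‖ ≤ 2 + |t| := by
  calc _ ≤ ‖Complex.exp (Complex.I * t * x) - 1‖ + ‖Complex.I * t * (Real.sin x : ℂ)‖ :=
        norm_sub_le _ _
    _ ≤ (‖Complex.exp (Complex.I * t * x)‖ + 1) + |t| * 1 := by
        gcongr
        · exact (norm_sub_le _ _).trans (by simp)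
        · simp only [norm_mul, Complex.norm_I, Complex.norm_real, Real.norm_eq_abs, one_mul]
          rw [mul_one]; exact mul_le_of_le_one_right (abs_nonneg t) (Real.abs_sin_le_one x)
    _ ≤ (1 + 1) + |t| := by
        have : ‖Complex.exp (Complex.I * t * x)‖ = 1 := by
          rw [Complex.norm_exp]; simp [Complex.mul_re]
        rw [this]; simp
    _ = 2 + |t| := by ring


lemma target_contOn (t : ℝ) : ContinuousOn
    (fun x : ℝ => (Complex.exp (Complex.I * t * x) - 1 - Complex.I * t * Real.sin x) *
      ((x ^ (-2 : ℝ) : ℝ) : ℂ)) (Ioi 0) := by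
  apply ContinuousOn.mul
  · exact (Continuous.continuousOn (by continuity))
  · refine Complex.continuous_ofReal.comp_continuousOn ?_
    intro x hx
    exact (Real.continuousAt_rpow_const x _ (Or.inl (ne_of_gt (mem_Ioi.mp hx)))).continuousWithinAt

lemma target_integrable (t : ℝ) : IntegrableOn
    (fun x : ℝ => (Complex.exp (Complex.I * t * x) - 1 - Complex.I * t * Real.sin x) *
      ((x ^ (-2 : ℝ) : ℝ) : ℂ)) (Ioi 0) := by
  have hmeas : AEStronglyMeasurable
      (fun x : ℝ => (Complex.exp (Complex.I * t * x) - 1 - Complex.I * t * Real.sin x) *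
        ((x ^ (-2 : ℝ) : ℝ) : ℂ)) (volume.restrict (Ioi (0:ℝ))) :=
    (target_contOn t).aestronglyMeasurable measurableSet_Ioi
  have hnorm : ∀ x : ℝ, 0 < x →
      ‖(Complex.exp (Complex.I * t * x) - 1 - Complex.I * t * Real.sin x) *
        ((x ^ (-2 : ℝ) : ℝ) : ℂ)‖
      = ‖Complex.exp (Complex.I * t * x) - 1 - Complex.I * t * Real.sin x‖ * x ^ (-2:ℝ) := by
    intro x hx
    rw [norm_mul, Complex.norm_real, Real.norm_eq_abs,
      _root_.abs_of_nonneg (Real.rpow_nonneg hx.le _)]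
  rw [← Ioc_union_Ioi_eq_Ioi (zero_le_one (α := ℝ)), integrableOn_union]
  constructor
  · refine Integrable.mono' (integrableOn_const (C := t^2 + |t|) measure_Ioc_lt_top.ne)
      (hmeas.mono_measure (Measure.restrict_mono Ioc_subset_Ioi_self le_rfl)) ?_
    filter_upwards [ae_restrict_mem measurableSet_Ioc] with x hx
    rw [hnorm x hx.1]
    have h1 : x ^ (-2:ℝ) = (x^2)⁻¹ := by
      rw [show (-2:ℝ) = -(2:ℕ) by norm_num, Real.rpow_neg hx.1.le, Real.rpow_natCast]
    calc _ ≤ ((t^2 + |t|) * x^2) * x ^ (-2:ℝ) := by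
          gcongr
          · exact Real.rpow_nonneg hx.1.le _
          · exact g_bound_sq t x
      _ = (t^2 + |t|) := by
          rw [h1]
          rw [mul_inv_eq_iff_eq_mul₀ (pow_ne_zero 2 (ne_of_gt hx.1))]
  · have hint : IntegrableOn (fun x : ℝ => (2 + |t|) * x ^ (-2:ℝ)) (Ioi (1:ℝ)) :=
      (integrableOn_Ioi_rpow_of_lt (by norm_num) zero_lt_one).const_mul _
    refine Integrable.mono' hint
      (hmeas.mono_measure (Measure.restrict_mono (Set.Ioi_subset_Ioi zero_le_one) le_rfl)) ?_
    filter_upwards [ae_restrict_mem measurableSet_Ioi] with x hx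
    have hx0 : (0:ℝ) < x := lt_trans zero_lt_one hx
    rw [hnorm x hx0]
    gcongr
    · exact g_bound_const t x


lemma laplace_g (t : ℝ) {s : ℝ} (hs : 0 < s) :
    ∫ x in Ioi (0:ℝ), ((Real.exp (-(s*x)) : ℝ) : ℂ) *
      (Complex.exp (Complex.I * t * x) - 1 - Complex.I * t * Real.sin x)
    = -(Complex.I*t - s)⁻¹ + (-(s:ℂ))⁻¹ + (t/2) * (Complex.I - s)⁻¹
      - (t/2) * (-Complex.I - s)⁻¹ := by
  have h1 : (Complex.I * t - s).re < 0 := by simp [Complex.sub_re, Complex.mul_re]; exact hs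
  have h2 : (-(s:ℂ)).re < 0 := by simpa using hs
  have h3 : (Complex.I - s).re < 0 := by simp [Complex.sub_re]; exact hs
  have h4 : (-Complex.I - s).re < 0 := by simp [Complex.sub_re]; exact hs
  have key : ∀ x : ℝ, ((Real.exp (-(s*x)) : ℝ) : ℂ) *
      (Complex.exp (Complex.I * t * x) - 1 - Complex.I * t * Real.sin x)
      = Complex.exp ((Complex.I*t - s) * x) - Complex.exp ((-(s:ℂ)) * x)
        - (t/2) * Complex.exp ((Complex.I - s) * x)
        + (t/2) * Complex.exp ((-Complex.I - s) * x) := by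
    intro x
    have hA : Complex.exp ((Complex.I*t - s) * x)
        = Complex.exp (Complex.I*t*x) * Complex.exp ((-(s*x):ℝ):ℂ) := by
      rw [← Complex.exp_add]; congr 1; push_cast; ring
    have hB : Complex.exp ((-(s:ℂ)) * x) = Complex.exp ((-(s*x):ℝ):ℂ) := by
      congr 1; push_cast; ring
    have hC : Complex.exp ((Complex.I - s) * x)
        = Complex.exp ((x:ℂ)*Complex.I) * Complex.exp ((-(s*x):ℝ):ℂ) := by
      rw [← Complex.exp_add]; congr 1; push_cast; ring
    have hD : Complex.exp ((-Complex.I - s) * x)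
        = Complex.exp (-((x:ℂ)*Complex.I)) * Complex.exp ((-(s*x):ℝ):ℂ) := by
      rw [← Complex.exp_add]; congr 1; push_cast; ring
    rw [Complex.ofReal_sin, Complex.sin, hA, hB, hC, hD, Complex.ofReal_exp]
    ring_nf
    simp only [Complex.I_sq]
    ring
  rw [MeasureTheory.setIntegral_congr_fun measurableSet_Ioi (fun x _ => key x)]
  rw [MeasureTheory.integral_add, MeasureTheory.integral_sub, MeasureTheory.integral_sub]
  · rw [cexp_integral h1, cexp_integral h2, MeasureTheory.integral_const_mul,
      MeasureTheory.integral_const_mul, cexp_integral h3, cexp_integral h4]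
    ring
  · exact cexp_integrableOn h1
  · exact cexp_integrableOn h2
  · exact (cexp_integrableOn h1).sub (cexp_integrableOn h2)
  · exact (cexp_integrableOn h3).const_mul _
  · exact ((cexp_integrableOn h1).sub (cexp_integrableOn h2)).sub
      ((cexp_integrableOn h3).const_mul _)
  · exact (cexp_integrableOn h4).const_mul _


lemma h_ident {t : ℝ} (ht : t ≠ 0) {s : ℝ} (hs : 0 < s) :
    (s:ℂ) * (-(Complex.I*t - s)⁻¹ + (-(s:ℂ))⁻¹ + (t/2) * (Complex.I - s)⁻¹
      - (t/2) * (-Complex.I - s)⁻¹)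
    = ((-(t^2/(s^2+t^2)) : ℝ) : ℂ) + ((t*s*(1/(s^2+t^2) - 1/(s^2+1)) : ℝ) : ℂ) * Complex.I := by
  have hs0 : (s:ℂ) ≠ 0 := Complex.ofReal_ne_zero.mpr hs.ne'
  have h1 : (Complex.I*t - s) ≠ 0 := fun h => by
    have := congrArg Complex.re h
    simp [Complex.sub_re, Complex.mul_re] at this
    exact hs.ne' this
  have h3 : (Complex.I - s) ≠ 0 := fun h => by
    have := congrArg Complex.re h
    simp [Complex.sub_re] at this
    exact hs.ne' this
  have h4 : (-Complex.I - s) ≠ 0 := fun h => by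
    have := congrArg Complex.re h
    simp [Complex.sub_re] at this
    exact hs.ne' this
  have hr1 : (s:ℝ)^2 + t^2 ≠ 0 := by positivity
  have hr2 : (s:ℝ)^2 + 1 ≠ 0 := by positivity
  have hc1 : ((s:ℂ))^2 + (t:ℂ)^2 ≠ 0 := by
    intro h
    have : ((s^2 + t^2 : ℝ) : ℂ) = 0 := by push_cast; linear_combination h
    exact hr1 (Complex.ofReal_eq_zero.mp this)
  have hc2 : ((s:ℂ))^2 + 1 ≠ 0 := by
    intro h
    have : ((s^2 + 1 : ℝ) : ℂ) = 0 := by push_cast; linear_combination h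
    exact hr2 (Complex.ofReal_eq_zero.mp this)
  have hI3 : Complex.I^3 = -Complex.I := by rw [pow_succ, Complex.I_sq]; ring
  have hI4 : Complex.I^4 = 1 := by rw [show (4:ℕ) = 2*2 from rfl, pow_mul, Complex.I_sq]; norm_num
  push_cast
  rw [inv_neg]
  field_simp
  ring_nf
  simp only [Complex.I_sq, hI3, hI4]
  ring


lemma u_integrableOn {t : ℝ} (ht : t ≠ 0) :
    IntegrableOn (fun s : ℝ => -(t^2/(s^2+t^2))) (Ioi 0) := by
  have hc : Continuous (fun s : ℝ => -(t^2/(s^2+t^2))) := by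
    refine (continuous_const.div (by continuity) (fun s => by positivity)).neg
  refine Integrable.mono' ((integrable_inv_one_add_sq.const_mul (t^2+1)).integrableOn)
    hc.aestronglyMeasurable.restrict ?_
  filter_upwards with s
  rw [Real.norm_eq_abs, abs_neg, abs_div, _root_.abs_of_nonneg (sq_nonneg t),
    _root_.abs_of_nonneg (by positivity : (0:ℝ) ≤ s^2+t^2)]
  rw [div_le_iff₀ (by positivity)]
  have h2 : (0:ℝ) < 1 + s^2 := by positivity
  have : (t^2+1) * (1+s^2)⁻¹ * (s^2+t^2) = (t^2+1) * (s^2+t^2) / (1+s^2) := by ring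
  rw [this, le_div_iff₀ h2]
  nlinarith [sq_nonneg s, sq_nonneg t, sq_nonneg (s*t)]

lemma u_integral {t : ℝ} (ht : t ≠ 0) :
    ∫ s in Ioi (0:ℝ), -(t^2/(s^2+t^2)) = -(Real.pi/2 * |t|) := by
  have habs : (0:ℝ) < |t| := abs_pos.mpr ht
  have hderiv : ∀ s ∈ Ici (0:ℝ),
      HasDerivAt (fun s : ℝ => -(|t| * Real.arctan (s/|t|))) (-(t^2/(s^2+t^2))) s := by
    intro s _
    have hd := ((Real.hasDerivAt_arctan (s/|t|)).comp s
      ((hasDerivAt_id s).div_const |t|)).const_mul |t| |>.neg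
    convert hd using 1
    · rfl
    · rfl
    · rfl
    have h1 : (s/|t|)^2 = s^2/t^2 := by rw [div_pow, _root_.sq_abs]
    field_simp [h1]
    rw [_root_.sq_abs]
    ring
  have htend : Tendsto (fun s : ℝ => -(|t| * Real.arctan (s/|t|))) atTop
      (nhds (-(|t| * (Real.pi/2)))) := by
    have h1 : Tendsto (fun s : ℝ => s/|t|) atTop atTop :=
      tendsto_id.atTop_div_const habs
    have h2 : Tendsto (fun s : ℝ => Real.arctan (s/|t|)) atTop (nhds (Real.pi/2)) :=
      (Real.tendsto_arctan_atTop.mono_right nhdsWithin_le_nhds).comp h1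
    exact (h2.const_mul |t|).neg
  have := integral_Ioi_of_hasDerivAt_of_tendsto' hderiv (u_integrableOn ht) htend
  rw [this]
  simp [Real.arctan_zero, mul_comm]

lemma v_integrableOn {t : ℝ} (ht : t ≠ 0) :
    IntegrableOn (fun s : ℝ => t*s*(1/(s^2+t^2) - 1/(s^2+1))) (Ioi 0) := by
  have hc : Continuous (fun s : ℝ => t*s*(1/(s^2+t^2) - 1/(s^2+1))) := by
    refine (continuous_const.mul continuous_id).mul
      (((continuous_const.div (by continuity) (fun s => by positivity))).sub
       ((continuous_const.div (by continuity) (fun s => by positivity))))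
  refine Integrable.mono' ((integrable_inv_one_add_sq.const_mul
      (|t*(1-t^2)|/(2*|t|))).integrableOn) hc.aestronglyMeasurable.restrict ?_
  filter_upwards [ae_restrict_mem measurableSet_Ioi] with s hs
  have hs0 : (0:ℝ) < s := hs
  have hvs : t*s*(1/(s^2+t^2) - 1/(s^2+1)) = t*(1-t^2)*(s/((s^2+t^2)*(s^2+1))) := by
    field_simp
    ring
  rw [Real.norm_eq_abs, hvs, abs_mul,
    _root_.abs_of_nonneg (by positivity : (0:ℝ) ≤ s/((s^2+t^2)*(s^2+1)))]
  have key : s/((s^2+t^2)*(s^2+1)) ≤ 1/(2*|t|) * (1+s^2)⁻¹ := by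
    have h1 : s/(s^2+t^2) ≤ 1/(2*|t|) := by
      rw [div_le_div_iff₀ (by positivity) (by positivity)]
      nlinarith [_root_.sq_abs t, sq_nonneg (s - |t|)]
    calc s/((s^2+t^2)*(s^2+1)) = (s/(s^2+t^2)) * (1/(s^2+1)) := by rw [div_mul_eq_div_div]; ring
      _ ≤ (1/(2*|t|)) * (1/(s^2+1)) := by
          gcongr
      _ = 1/(2*|t|) * (1+s^2)⁻¹ := by rw [inv_eq_one_div, add_comm]
  calc |t*(1-t^2)| * (s/((s^2+t^2)*(s^2+1)))
      ≤ |t*(1-t^2)| * (1/(2*|t|) * (1+s^2)⁻¹) := by gcongr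
    _ = |t*(1-t^2)|/(2*|t|) * (1+s^2)⁻¹ := by ring

lemma v_integral {t : ℝ} (ht : t ≠ 0) :
    ∫ s in Ioi (0:ℝ), t*s*(1/(s^2+t^2) - 1/(s^2+1)) = -(t * Real.log |t|) := by
  have habs : (0:ℝ) < |t| := abs_pos.mpr ht
  have hderiv : ∀ s ∈ Ici (0:ℝ),
      HasDerivAt (fun s : ℝ => t/2 * (Real.log (s^2+t^2) - Real.log (s^2+1)))
        (t*s*(1/(s^2+t^2) - 1/(s^2+1))) s := by
    intro s _
    have ha : s^2+t^2 ≠ 0 := by positivity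
    have hb : s^2+1 ≠ 0 := by positivity
    have h1 : HasDerivAt (fun s : ℝ => Real.log (s^2+t^2)) ((s^2+t^2)⁻¹ * (2*s)) s := by
      have := (Real.hasDerivAt_log ha).comp s (((hasDerivAt_pow 2 s)).add_const (t^2))
      simpa [Function.comp_def] using this
    have h2 : HasDerivAt (fun s : ℝ => Real.log (s^2+1)) ((s^2+1)⁻¹ * (2*s)) s := by
      have := (Real.hasDerivAt_log hb).comp s (((hasDerivAt_pow 2 s)).add_const 1)
      simpa [Function.comp_def] using this
    have := ((h1.sub h2).const_mul (t/2))
    convert this using 1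
    · rfl
    · rfl
    · rfl
    field_simp
  have htend : Tendsto (fun s : ℝ => t/2 * (Real.log (s^2+t^2) - Real.log (s^2+1))) atTop
      (nhds 0) := by
    have hratio : Tendsto (fun s : ℝ => 1 + (t^2-1)/(s^2+1)) atTop (nhds 1) := by
      have hsq : Tendsto (fun s : ℝ => s^2+1) atTop atTop :=
        tendsto_atTop_add_const_right _ 1 (tendsto_pow_atTop two_ne_zero)
      simpa using (tendsto_const_nhds.div_atTop hsq).const_add 1
    have hlog : Tendsto (fun s : ℝ => Real.log (1 + (t^2-1)/(s^2+1))) atTop (nhds 0) := by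
      have := (Real.continuousAt_log one_ne_zero).tendsto.comp hratio
      simpa [Function.comp_def] using this
    have heq : ∀ᶠ s : ℝ in atTop, Real.log (1 + (t^2-1)/(s^2+1))
        = Real.log (s^2+t^2) - Real.log (s^2+1) := by
      filter_upwards with s
      have ha : s^2+t^2 ≠ 0 := by positivity
      have hb : s^2+1 ≠ 0 := by positivity
      rw [show 1 + (t^2-1)/(s^2+1) = (s^2+t^2)/(s^2+1) by field_simp; ring,
        Real.log_div ha hb]
    have := hlog.congr' heq
    simpa using this.const_mul (t/2)
  have := integral_Ioi_of_hasDerivAt_of_tendsto' hderiv (v_integrableOn ht) htend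
  rw [this]
  have h0 : Real.log ((0:ℝ)^2+t^2) = 2 * Real.log |t| := by
    rw [show (0:ℝ)^2+t^2 = |t|^2 by rw [_root_.sq_abs]; ring, Real.log_pow]
    push_cast; ring
  simp [h0]
  ring


lemma weight_integrableOn {x : ℝ} (hx : 0 < x) :
    IntegrableOn (fun s : ℝ => s * Real.exp (-(s*x))) (Ioi 0) := by
  have := integrableOn_rpow_mul_exp_neg_mul_rpow (s := 1) (p := 1) (b := x)
    (by norm_num) one_pos hx
  refine this.congr_fun (fun s hs => ?_) measurableSet_Ioi
  beta_reduce
  rw [Real.rpow_one, show -x*s = -(s*x) by ring]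

lemma weight_integral {x : ℝ} (hx : 0 < x) :
    ∫ s in Ioi (0:ℝ), s * Real.exp (-(s*x)) = x ^ (-2:ℝ) := by
  have h := Real.integral_rpow_mul_exp_neg_mul_Ioi (a := 2) (r := x) two_pos hx
  have heq : ∀ s ∈ Ioi (0:ℝ), s ^ ((2:ℝ)-1) * Real.exp (-(x*s)) = s * Real.exp (-(s*x)) := by
    intro s hs
    rw [show (2:ℝ)-1 = 1 by norm_num, Real.rpow_one, mul_comm x s]
  rw [← MeasureTheory.setIntegral_congr_fun measurableSet_Ioi heq, h, Real.Gamma_two, mul_one]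
  rw [one_div, ← Real.rpow_neg_one x, ← Real.rpow_mul hx.le]
  norm_num

set_option maxHeartbeats 1000000 in
lemma main_integral {t : ℝ} (ht : t ≠ 0) :
    ∫ x in Ioi (0:ℝ),
        (Complex.exp (Complex.I * t * x) - 1 - Complex.I * t * Real.sin x) *
          ((x ^ (-2 : ℝ) : ℝ) : ℂ) =
      -((Real.pi / 2 * |t| : ℝ) : ℂ) - Complex.I * t * Real.log |t| := by
  set g : ℝ → ℂ := fun x => Complex.exp (Complex.I * t * x) - 1 - Complex.I * t * Real.sin x
    with hg
  set F : ℝ × ℝ → ℂ := fun p => ((p.1 * Real.exp (-(p.1*p.2)) : ℝ) : ℂ) * g p.2 with hF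
  have hgcont : Continuous g := by
    rw [hg]
    refine Continuous.sub (Continuous.sub ?_ continuous_const) ?_
    · exact Complex.continuous_exp.comp (by continuity)
    · exact continuous_const.mul (Complex.continuous_ofReal.comp Real.continuous_sin)
  have hFcont : Continuous F := by
    rw [hF]
    exact (Complex.continuous_ofReal.comp (by continuity)).mul (hgcont.comp continuous_snd)
  have hFmeas : AEStronglyMeasurable F ((volume.restrict (Ioi (0:ℝ))).prod (volume.restrict (Ioi (0:ℝ)))) := hFcont.aestronglyMeasurable
  have hF1 : ∀ᵐ x ∂(volume.restrict (Ioi (0:ℝ))), Integrable (fun s => F (s, x)) (volume.restrict (Ioi (0:ℝ))) := by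
    filter_upwards [ae_restrict_mem measurableSet_Ioi] with x hx
    simp only [hF]
    exact ((weight_integrableOn hx).ofReal.mul_const _)
  have hnorm_eq : ∀ x : ℝ, 0 < x →
      (∫ s in Ioi (0:ℝ), ‖F (s,x)‖) = ‖g x * ((x ^ (-2:ℝ) : ℝ) : ℂ)‖ := by
    intro x hx
    have e1 : ∀ s ∈ Ioi (0:ℝ), ‖F (s,x)‖ = (s * Real.exp (-(s*x))) * ‖g x‖ := by
      intro s hs
      simp only [hF]
      rw [norm_mul, Complex.norm_real, Real.norm_eq_abs,
        _root_.abs_of_nonneg (mul_nonneg (le_of_lt (mem_Ioi.mp hs)) (Real.exp_pos _).le)]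
    rw [MeasureTheory.setIntegral_congr_fun measurableSet_Ioi e1,
      MeasureTheory.integral_mul_const, weight_integral hx, norm_mul,
      Complex.norm_real, Real.norm_eq_abs,
      _root_.abs_of_nonneg (Real.rpow_nonneg hx.le _), mul_comm]
  have hF2 : Integrable (fun x => ∫ s in Ioi (0:ℝ), ‖F (s,x)‖) (volume.restrict (Ioi (0:ℝ))) := by
    refine ((target_integrable t).norm).congr ?_
    filter_upwards [ae_restrict_mem measurableSet_Ioi] with x hx
    exact (hnorm_eq x hx).symm
  have hFint : Integrable F ((volume.restrict (Ioi (0:ℝ))).prod (volume.restrict (Ioi (0:ℝ)))) := (integrable_prod_iff' hFmeas).mpr ⟨hF1, hF2⟩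
  have step1 : ∀ x ∈ Ioi (0:ℝ), (∫ s in Ioi (0:ℝ), F (s,x)) = g x * ((x ^ (-2:ℝ) : ℝ) : ℂ) := by
    intro x hx
    rw [mem_Ioi] at hx
    have : (∫ s in Ioi (0:ℝ), F (s,x)) = (∫ s in Ioi (0:ℝ), ((s * Real.exp (-(s*x)) : ℝ) : ℂ)) * g x := by
      simp only [hF]
      exact MeasureTheory.integral_mul_const _ _
    have hco : (∫ s in Ioi (0:ℝ), ((s * Real.exp (-(s*x)) : ℝ) : ℂ))
        = ((∫ s in Ioi (0:ℝ), s * Real.exp (-(s*x)) : ℝ) : ℂ) := integral_ofReal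
    rw [this, hco, weight_integral hx, mul_comm]
  have step2 : ∀ s ∈ Ioi (0:ℝ), (∫ x in Ioi (0:ℝ), F (s,x))
      = ((-(t^2/(s^2+t^2)) : ℝ) : ℂ) + ((t*s*(1/(s^2+t^2) - 1/(s^2+1)) : ℝ) : ℂ) * Complex.I := by
    intro s hs
    rw [mem_Ioi] at hs
    have e1 : ∀ x : ℝ, F (s,x) = (s:ℂ) * (((Real.exp (-(s*x)) : ℝ) : ℂ) * g x) := by
      intro x
      simp only [hF]
      push_cast
      ring
    simp_rw [e1]
    rw [MeasureTheory.integral_const_mul, laplace_g t hs, h_ident ht hs]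
  calc ∫ x in Ioi (0:ℝ), g x * ((x ^ (-2:ℝ) : ℝ) : ℂ)
      = ∫ x in Ioi (0:ℝ), (∫ s in Ioi (0:ℝ), F (s,x)) :=
        (MeasureTheory.setIntegral_congr_fun measurableSet_Ioi step1).symm
    _ = ∫ s in Ioi (0:ℝ), (∫ x in Ioi (0:ℝ), F (s,x)) :=
        MeasureTheory.integral_integral_swap (f := fun x s => F (s,x)) hFint.swap
    _ = ∫ s in Ioi (0:ℝ), (((-(t^2/(s^2+t^2)) : ℝ) : ℂ)
          + ((t*s*(1/(s^2+t^2) - 1/(s^2+1)) : ℝ) : ℂ) * Complex.I) :=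
        MeasureTheory.setIntegral_congr_fun measurableSet_Ioi step2
    _ = ((∫ s in Ioi (0:ℝ), -(t^2/(s^2+t^2)) : ℝ) : ℂ)
          + ((∫ s in Ioi (0:ℝ), t*s*(1/(s^2+t^2) - 1/(s^2+1)) : ℝ) : ℂ) * Complex.I := by
        have hu : Integrable (fun s : ℝ => ((-(t^2/(s^2+t^2)) : ℝ) : ℂ))
            (volume.restrict (Ioi 0)) := (u_integrableOn ht).ofReal
        have hv : Integrable (fun s : ℝ => ((t*s*(1/(s^2+t^2) - 1/(s^2+1)) : ℝ) : ℂ) * Complex.I)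
            (volume.restrict (Ioi 0)) := ((v_integrableOn ht).ofReal).mul_const Complex.I
        have hcu : (∫ s in Ioi (0:ℝ), ((-(t^2/(s^2+t^2)) : ℝ) : ℂ))
            = ((∫ s in Ioi (0:ℝ), -(t^2/(s^2+t^2)) : ℝ) : ℂ) := integral_ofReal
        have hcv : (∫ s in Ioi (0:ℝ), ((t*s*(1/(s^2+t^2) - 1/(s^2+1)) : ℝ) : ℂ))
            = ((∫ s in Ioi (0:ℝ), t*s*(1/(s^2+t^2) - 1/(s^2+1)) : ℝ) : ℂ) := integral_ofReal
        rw [MeasureTheory.integral_add hu hv, MeasureTheory.integral_mul_const, hcu, hcv]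
    _ = -((Real.pi / 2 * |t| : ℝ) : ℂ) - Complex.I * t * Real.log |t| := by
        rw [u_integral ht, v_integral ht]
        push_cast
        ring

theorem stmt10 (t : ℝ) :
    IntegrableOn
      (fun x : ℝ => (Complex.exp (Complex.I * t * x) - 1 - Complex.I * t * Real.sin x) *
        ((x ^ (-2 : ℝ) : ℝ) : ℂ))
      (Set.Ioi (0 : ℝ)) ∧
    ∫ x in Set.Ioi (0 : ℝ),
        (Complex.exp (Complex.I * t * x) - 1 - Complex.I * t * Real.sin x) *
          ((x ^ (-2 : ℝ) : ℝ) : ℂ) =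
      -((Real.pi / 2 * |t| : ℝ) : ℂ) - Complex.I * t * Real.log |t| := by
  refine ⟨target_integrable t, ?_⟩
  rcases eq_or_ne t 0 with rfl | ht
  · simp
  · exact main_integral ht
end

section
/- Let μ be a non-degenerate stable probability measure on ℝ with characteristic function φ, and for each positive integer n let a_n > 0 and b_n ∈ ℝ satisfy φ(t)^n = φ(a_n t)·exp(i b_n t) for all real t. Then there exists a real α > 0 such that a_n = n^{1/α} for every positive integer n. -/
open MeasureTheory Complex Filter

theorem stmt11 (μ : Measure ℝ) [IsProbabilityMeasure μ]
    (hnd : ∃ t : ℝ, ‖charFun' μ t‖ < 1)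
    (a b : ℕ → ℝ) (ha : ∀ n : ℕ, 0 < n → 0 < a n)
    (hstable : ∀ n : ℕ, 0 < n → ∀ t : ℝ,
      (charFun' μ t) ^ n = charFun' μ (a n * t) * Complex.exp (Complex.I * (b n) * t)) :
    ∃ α : ℝ, 0 < α ∧ ∀ n : ℕ, 0 < n → a n = (n : ℝ) ^ (1 / α) := by
  obtain ⟨t0, ht0⟩ := hnd
  set g : ℝ → ℝ := fun t => ‖charFun' μ t‖ with hg_def
  have hg0 : g 0 = 1 := by simp [hg_def, charFun']
  have hgnn : ∀ t, 0 ≤ g t := fun t => norm_nonneg _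
  have hg1 : ∀ t, g t ≤ 1 := by
    intro t
    have := norm_integral_le_of_norm_le_const (μ := μ)
      (f := fun x : ℝ => Complex.exp (Complex.I * t * x)) (C := 1) ?_
    · simpa [hg_def, charFun'] using this
    · filter_upwards with x
      simp [Complex.norm_exp]
  have hgc : Continuous g := by
    have h1 : Continuous (charFun' μ) := by
      apply continuous_of_dominated (bound := fun _ : ℝ => (1:ℝ))
      · intro t
        exact (Continuous.aestronglyMeasurable (by continuity))
      · intro t
        filter_upwards with x
        simp [Complex.norm_exp]
      · exact integrable_const 1
      · filter_upwards with x
        continuity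
    exact continuous_norm.comp h1
  have hgn : ∀ n : ℕ, 0 < n → ∀ t, (g t) ^ n = g (a n * t) := by
    intro n hn t
    have := congrArg (‖·‖) (hstable n hn t)
    simpa [hg_def, norm_pow, norm_mul, Complex.norm_exp] using this
  -- key : no contraction ratio below 1
  have key : ∀ c : ℝ, 0 < c → c < 1 → (∀ t, g (c * t) ≤ g t) → False := by
    intro c hc hc1 h
    have iter : ∀ k : ℕ, ∀ t, g (c ^ k * t) ≤ g t := by
      intro k
      induction k with
      | zero => intro t; simp
      | succ k ih =>
        intro t
        have : g (c ^ (k+1) * t) = g (c ^ k * (c * t)) := by ring_nf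
        rw [this]
        exact (ih (c * t)).trans (h t)
    have htend : Tendsto (fun k : ℕ => c ^ k * t0) atTop (nhds 0) := by
      simpa using (tendsto_pow_atTop_nhds_zero_of_lt_one hc.le hc1).mul_const t0
    have htend2 : Tendsto (fun k : ℕ => g (c ^ k * t0)) atTop (nhds 1) := by
      have := (hgc.tendsto 0).comp htend
      simpa [hg0, Function.comp_def] using this
    have hle : (1:ℝ) ≤ g t0 := le_of_tendsto htend2 (Eventually.of_forall fun k => iter k t0)
    exact absurd (lt_of_le_of_lt hle ht0) (lt_irrefl _)
  have M : ∀ c : ℝ, 0 < c → (∀ t, g (c * t) ≤ g t) → 1 ≤ c := by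
    intro c hc h
    by_contra hlt
    exact key c hc (lt_of_not_ge hlt) h
  have L : ∀ c : ℝ, 0 < c → (∀ t, g (c * t) = g t) → c = 1 := by
    intro c hc h
    rcases lt_trichotomy c 1 with h1 | h1 | h1
    · exact absurd (M c hc fun t => (h t).le) (not_le.mpr h1)
    · exact h1
    · exfalso
      apply key c⁻¹ (inv_pos.mpr hc) (inv_lt_one_of_one_lt₀ h1)
      intro t
      have := h (c⁻¹ * t)
      rw [← mul_assoc, mul_inv_cancel₀ hc.ne', one_mul] at this
      exact this.ge.trans_eq' rfl
  have ha1 : a 1 = 1 := by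
    apply L (a 1) (ha 1 one_pos)
    intro t
    have := hgn 1 one_pos t
    simpa using this.symm
  have hmul : ∀ m n : ℕ, 0 < m → 0 < n → a (m * n) = a m * a n := by
    intro m n hm hn
    have hamn := ha (m*n) (Nat.mul_pos hm hn)
    have ham := ha m hm
    have han := ha n hn
    have hpos : 0 < a m * a n := mul_pos ham han
    have hrat : a (m * n) / (a m * a n) = 1 := by
      apply L _ (div_pos hamn hpos)
      intro s
      have h1 : ∀ t, g (a (m*n) * t) = g (a m * (a n * t)) := by
        intro t
        rw [← hgn (m*n) (Nat.mul_pos hm hn) t, ← hgn m hm (a n * t), ← hgn n hn t,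
          ← pow_mul, Nat.mul_comm]
      have := h1 (s / (a m * a n))
      have e1 : a (m*n) * (s / (a m * a n)) = a (m*n) / (a m * a n) * s := by ring
      have e2 : a m * (a n * (s / (a m * a n))) = s := by
        field_simp
      rw [e1, e2] at this
      exact this
    field_simp at hrat
    linarith [hrat]
  have hmono : ∀ m n : ℕ, 0 < m → m ≤ n → a m ≤ a n := by
    intro m n hm hmn
    have hn : 0 < n := lt_of_lt_of_le hm hmn
    have ham := ha m hm
    have han := ha n hn
    have h1 : ∀ s, g (a n / a m * s) ≤ g s := by
      intro s
      have := hgn n hn (s / a m)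
      have h2 := hgn m hm (s / a m)
      have e2 : a m * (s / a m) = s := by field_simp
      rw [e2] at h2
      have hle : g (s / a m) ^ n ≤ g (s / a m) ^ m :=
        pow_le_pow_of_le_one (hgnn _) (hg1 _) hmn
      rw [this, h2] at hle
      have e1 : a n * (s / a m) = a n / a m * s := by ring
      rw [e1] at hle
      exact hle
    have := M _ (div_pos han ham) h1
    rw [le_div_iff₀ ham, one_mul] at this
    exact this
  have hpow : ∀ n : ℕ, 0 < n → ∀ k : ℕ, a (n ^ k) = (a n) ^ k := by
    intro n hn k
    induction k with
    | zero => simpa using ha1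
    | succ k ih =>
      rw [pow_succ, hmul _ n (pow_pos hn k) hn, ih, pow_succ]
  have ha2 : 1 < a 2 := by
    have hge : 1 ≤ a 2 := ha1 ▸ hmono 1 2 one_pos (by norm_num)
    rcases lt_or_eq_of_le hge with h | h
    · exact h
    · exfalso
      -- a 2 = 1: g t ^ 2 = g t, so g t ∈ {0,1}, contradiction with IVT
      have hsq : ∀ t, g t ^ 2 = g t := by
        intro t
        have := hgn 2 (by norm_num) t
        rw [← h, one_mul] at this
        exact this
      have hval : ∀ t, g t = 0 ∨ g t = 1 := by
        intro t
        have := hsq t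
        have h2 : g t * (g t - 1) = 0 := by ring_nf; nlinarith [hsq t]
        rcases mul_eq_zero.mp h2 with h3 | h3
        · exact Or.inl h3
        · exact Or.inr (by linarith)
      have hmem : (1/2 : ℝ) ∈ Set.uIcc (g 0) (g t0) := by
        rcases hval t0 with h3 | h3
        · rw [hg0, h3]
          constructor <;> simp [Set.mem_uIcc] <;> norm_num
        · exfalso
          have ht0' : g t0 < 1 := ht0
          rw [h3] at ht0'
          exact lt_irrefl _ ht0'
      obtain ⟨s, _, hs⟩ := intermediate_value_uIcc (hgc.continuousOn (s := Set.uIcc 0 t0)) hmem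
      rcases hval s with h3 | h3 <;> rw [hs] at h3 <;> norm_num at h3
  have hgt : ∀ n : ℕ, 2 ≤ n → 1 < a n := fun n hn => lt_of_lt_of_le ha2 (hmono 2 n two_pos hn)
  -- ratio claim
  have hclaim : ∀ m n : ℕ, 2 ≤ m → 2 ≤ n →
      Real.log (a m) * Real.log n ≤ Real.log m * Real.log (a n) := by
    intro m n hm hn
    by_contra hlt
    push_neg at hlt
    have hlogm : 0 < Real.log m := Real.log_pos (by exact_mod_cast hm)
    have hlogn : 0 < Real.log n := Real.log_pos (by exact_mod_cast hn)
    have hlam : 0 < Real.log (a m) := Real.log_pos (hgt m hm)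
    have hlan : 0 < Real.log (a n) := Real.log_pos (hgt n hn)
    have hratio : Real.log m / Real.log n < Real.log (a m) / Real.log (a n) := by
      rw [div_lt_div_iff₀ hlogn hlan]
      linarith
    obtain ⟨q, hq1, hq2⟩ := exists_rat_btwn hratio
    have hqpos : 0 < (q : ℝ) := lt_trans (div_pos hlogm hlogn) hq1
    set p : ℕ := q.num.toNat with hp_def
    set k : ℕ := q.den with hk_def
    have hkpos : 0 < k := q.pos
    have hq_num_pos : 0 < q.num := by exact_mod_cast (Rat.num_pos.mpr (by exact_mod_cast hqpos))
    have hq_cast : (q : ℝ) = (p : ℝ) / (k : ℝ) := by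
      rw [Rat.cast_def]
      congr 1
      · rw [hp_def]
        exact_mod_cast (Int.toNat_of_nonneg hq_num_pos.le).symm
    -- k log m ≤ p log n
    have h1 : (k : ℝ) * Real.log m ≤ (p : ℝ) * Real.log n := by
      have : Real.log m / Real.log n < (p:ℝ)/(k:ℝ) := hq_cast ▸ hq1
      rw [div_lt_div_iff₀ hlogn (by exact_mod_cast hkpos)] at this
      linarith
    -- m^k ≤ n^p as naturals
    have h2 : (m : ℝ) ^ k ≤ (n : ℝ) ^ p := by
      have hm0 : (0:ℝ) < m := by positivity
      have hn0 : (0:ℝ) < n := by positivity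
      rw [← Real.exp_log (pow_pos hm0 k), ← Real.exp_log (pow_pos hn0 p),
        Real.log_pow, Real.log_pow]
      exact Real.exp_le_exp.mpr (by exact_mod_cast h1)
    have h3 : m ^ k ≤ n ^ p := by exact_mod_cast (by push_cast; exact h2 : ((m^k : ℕ) : ℝ) ≤ ((n^p : ℕ) : ℝ))
    have h4 : a (m ^ k) ≤ a (n ^ p) :=
      hmono _ _ (pow_pos (by omega : 0 < m) k) h3
    rw [hpow m (by omega) k, hpow n (by omega) p] at h4
    have h5 : (k : ℝ) * Real.log (a m) ≤ (p : ℝ) * Real.log (a n) := by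
      have := Real.log_le_log (pow_pos (ha m (by omega)) k) h4
      rwa [Real.log_pow, Real.log_pow] at this
    have h6 : Real.log (a m) / Real.log (a n) ≤ (p:ℝ)/(k:ℝ) := by
      rw [div_le_div_iff₀ hlan (by exact_mod_cast hkpos)]
      linarith
    rw [← hq_cast] at h6
    linarith
  have heq : ∀ m n : ℕ, 2 ≤ m → 2 ≤ n →
      Real.log (a m) * Real.log n = Real.log m * Real.log (a n) := by
    intro m n hm hn
    have h1 := hclaim m n hm hn
    have h2 := hclaim n m hn hm
    linarith
  set c := Real.log (a 2) / Real.log 2 with hc_def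
  have hlog2 : 0 < Real.log 2 := Real.log_pos (by norm_num)
  have hla2 : 0 < Real.log (a 2) := Real.log_pos ha2
  have hc : 0 < c := div_pos hla2 hlog2
  refine ⟨1/c, by positivity, ?_⟩
  intro n hn
  rw [one_div_one_div]
  rcases Nat.lt_or_ge n 2 with h2 | h2
  · interval_cases n
    · simp [ha1]
  · have hlogn : 0 < Real.log n := Real.log_pos (by exact_mod_cast h2)
    have := heq n 2 h2 (le_refl 2)
    have hlan : Real.log (a n) = c * Real.log n := by
      rw [hc_def]
      field_simp
      push_cast at this ⊢
      linarith
    have han := ha n hn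
    rw [← Real.exp_log han, hlan, Real.rpow_def_of_pos (by exact_mod_cast lt_of_lt_of_le two_pos h2 : (0:ℝ) < n), mul_comm]
end
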